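/- arXiv:2201.12856 — 4 statements merged into one kernel-verified Lean document; each statement's English description precedes it below -/
import Mathlib

section
/- For κ > 0 and θ ∈ [0,1], the series ∑_{k=-∞}^{∞} e^{i2πkθ}/(κ² + (2πk)²)² equals ((sinh(κ/2) + (κ/2)cosh(κ/2))/(4κ³ sinh²(κ/2))) · cosh(κ(θ - 1/2)) − (1/(4κ² sinh(κ/2))) · (θ - 1/2) · sinh(κ(θ - 1/2)). -/
open Real Complex

noncomputable def circGm (κ : ℝ) (x : ℝ) : ℂ :=
  (((Real.sinh (κ/2) + (κ/2) * Real.cosh (κ/2)) / (4 * κ^3 * (Real.sinh (κ/2))^2)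
      * Real.cosh (κ * (x - 1/2))
    - 1 / (4 * κ^2 * Real.sinh (κ/2)) * (x - 1/2) * Real.sinh (κ * (x - 1/2)) : ℝ) : ℂ)

lemma circGm_cont (κ : ℝ) : Continuous (circGm κ) := by
  unfold circGm
  fun_prop

lemma circGm_period (κ : ℝ) : circGm κ 0 = circGm κ 1 := by
  unfold circGm
  rw [show κ * (0 - 1/2) = -(κ * (1 - 1/2)) by ring]
  rw [Real.cosh_neg, Real.sinh_neg]
  push_cast
  ring

lemma integral_x_mul_cexp (c : ℂ) (hc : c ≠ 0) :
    ∫ x in (0:ℝ)..1, (x:ℂ) * Complex.exp (c * x)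
      = (c - 1)/c^2 * Complex.exp c + 1/c^2 := by
  have H : ∀ x : ℝ, HasDerivAt (fun y : ℝ => (c * (y:ℂ) - 1)/c^2 * Complex.exp (c * y))
      ((x:ℂ) * Complex.exp (c * x)) x := by
    intro x
    have h1 : HasDerivAt (fun z : ℂ => (c * z - 1)/c^2 * Complex.exp (c * z))
        ((c/c^2) * Complex.exp (c * x) + (c * x - 1)/c^2 * (Complex.exp (c * x) * c)) (x:ℂ) := by
      have ha : HasDerivAt (fun z : ℂ => (c * z - 1)/c^2) (c/c^2) (x:ℂ) := by
        simpa using (((hasDerivAt_id (x:ℂ)).const_mul c).sub_const 1).div_const (c^2)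
      have hb : HasDerivAt (fun z : ℂ => Complex.exp (c * z)) (Complex.exp (c * (x:ℂ)) * c) (x:ℂ) := by
        simpa [Function.comp_def] using (Complex.hasDerivAt_exp (c * (x:ℂ))).comp (x:ℂ) ((hasDerivAt_id (x:ℂ)).const_mul c)
      exact ha.mul hb
    have := h1.comp_ofReal
    convert this using 1
    field_simp
    ring
  rw [intervalIntegral.integral_eq_sub_of_hasDerivAt (fun x _ => H x)
    (((continuous_ofReal.mul (Complex.continuous_exp.comp
      (continuous_const.mul continuous_ofReal))).intervalIntegrable 0 1))]
  simp
  ring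

set_option maxHeartbeats 1000000 in
lemma circ_alg_key (K T P M S C : ℂ) (hK : K ≠ 0) (hS : S ≠ 0) (hp : P ≠ 0) (hm : M ≠ 0)
    (hP : P = K - T) (hM : M = -K - T) (hC : C^2 = S^2 + 1) :
    ((S + K/2*C)/(4*K^3*S^2)/2 + (1/(4*K^2*S))/4) * (C - S) * (((C+S)*(C+S) - 1)/P)
      + (-((1/(4*K^2*S))/2) * (C - S)) * ((P - 1)/P^2 * ((C+S)*(C+S)) + 1/P^2)
      + ((S + K/2*C)/(4*K^3*S^2)/2 - (1/(4*K^2*S))/4) * (C + S) * (((C-S)*(C-S) - 1)/M)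
      + ((1/(4*K^2*S))/2) * (C + S) * (((M - 1)/M^2) * ((C-S)*(C-S)) + 1/M^2)
      = 1/(K^2 - T^2)^2 := by
  have hiK : K * K⁻¹ = 1 := mul_inv_cancel₀ hK
  have hiS : S * S⁻¹ = 1 := mul_inv_cancel₀ hS
  have hiP : P * P⁻¹ = 1 := mul_inv_cancel₀ hp
  have hiM : M * M⁻¹ = 1 := mul_inv_cancel₀ hm
  have hPM : M = P - 2*K := by rw [hP, hM]; ring
  have hR : (1:ℂ)/(K^2 - T^2)^2 = P⁻¹^2 * M⁻¹^2 := by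
    have h : (K^2 - T^2)^2 = P^2 * M^2 := by rw [hP, hM]; ring
    rw [h, one_div, mul_inv, ← inv_pow, ← inv_pow]
  rw [hR]
  linear_combination
      ((1)*P⁻¹^2*M⁻¹^2 + (-1/16)*C^2*K⁻¹^2*S⁻¹^2*M⁻¹ + (-1/16)*C^2*K⁻¹^2*S⁻¹^2*P⁻¹ + (1/16)*C^4*K⁻¹^2*S⁻¹^2*M⁻¹ + (1/16)*C^4*K⁻¹^2*S⁻¹^2*P⁻¹ + (-1/4)*M^2*K⁻¹^2*P⁻¹^2*M⁻¹^2 + (-1/4)*P^2*K⁻¹^2*P⁻¹^2*M⁻¹^2 + (-1/16)*S*C*K⁻¹^2*S⁻¹^2*M⁻¹ + (1/16)*S*C*K⁻¹^2*S⁻¹^2*P⁻¹ + (-1/16)*S*C^3*K⁻¹^2*S⁻¹^2*M⁻¹ + (1/16)*S*C^3*K⁻¹^2*S⁻¹^2*P⁻¹ + (-1/16)*S^2*C^2*K⁻¹^2*S⁻¹^2*M⁻¹ + (-1/16)*S^2*C^2*K⁻¹^2*S⁻¹^2*P⁻¹ + (1/16)*S^3*C*K⁻¹^2*S⁻¹^2*M⁻¹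 + (-1/16)*S^3*C*K⁻¹^2*S⁻¹^2*P⁻¹ + (1)*K*K⁻¹*P⁻¹^2*M⁻¹^2 + (1)*K^2*K⁻¹^2*P⁻¹^2*M⁻¹^2) * hiK
      + ((1/16)*K⁻¹^2*M⁻¹ + (1/8)*K⁻¹^2*M⁻¹^2 + (1/16)*K⁻¹^2*P⁻¹ + (1/8)*K⁻¹^2*P⁻¹^2 + (-1/8)*K⁻¹^3*M⁻¹ + (1/8)*K⁻¹^3*P⁻¹ + (-1/16)*C*K⁻¹^2*S⁻¹*M⁻¹ + (1/16)*C*K⁻¹^2*S⁻¹*P⁻¹ + (-1/8)*C*K⁻¹^3*S⁻¹*M⁻¹ + (-1/8)*C*K⁻¹^3*S⁻¹*P⁻¹ + (1/16)*C^2*K⁻¹^2*M⁻¹ + (1/8)*C^2*K⁻¹^2*M⁻¹^2 + (1/16)*C^2*K⁻¹^2*P⁻¹ + (1/8)*C^2*K⁻¹^2*P⁻¹^2 + (-1/8)*C^2*K⁻¹^3*M⁻¹ + (1/8)*C^2*K⁻¹^3*P⁻¹ + (-1/16)*C^3*K⁻¹^2*S⁻¹*M⁻¹ + (1/16)*C^3*K⁻¹^2*S⁻¹*P⁻¹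 + (1/8)*C^3*K⁻¹^3*S⁻¹*M⁻¹ + (1/8)*C^3*K⁻¹^3*S⁻¹*P⁻¹ + (-1/8)*M*C^2*K⁻¹^2*M⁻¹^2 + (-1/8)*P*C^2*K⁻¹^2*P⁻¹^2 + (-1/8)*S*K⁻¹^3*S⁻¹*M⁻¹ + (1/8)*S*K⁻¹^3*S⁻¹*P⁻¹ + (1/8)*S*C*K⁻¹^2*M⁻¹ + (-1/8)*S*C*K⁻¹^2*P⁻¹ + (-1/8)*S*C^2*K⁻¹^3*S⁻¹*M⁻¹ + (1/8)*S*C^2*K⁻¹^3*S⁻¹*P⁻¹ + (-1/8)*S*M*C*K⁻¹^2*M⁻¹^2 + (1/8)*S*P*C*K⁻¹^2*P⁻¹^2 + (-1/16)*S^2*K⁻¹^2*M⁻¹ + (-1/8)*S^2*K⁻¹^2*M⁻¹^2 + (-1/16)*S^2*K⁻¹^2*P⁻¹ + (-1/8)*S^2*K⁻¹^2*P⁻¹^2 + (1/8)*S^2*K⁻¹^3*M⁻¹ + (-1/8)*S^2*K⁻¹^3*P⁻¹ + (1/16)*S^2*C*K⁻¹^2*S⁻¹*M⁻¹ + (-1/16)*S^2*C*K⁻¹^2*S⁻¹*P⁻¹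 + (-1/8)*S^2*C*K⁻¹^3*S⁻¹*M⁻¹ + (-1/8)*S^2*C*K⁻¹^3*S⁻¹*P⁻¹ + (1/8)*S^2*M*K⁻¹^2*M⁻¹^2 + (1/8)*S^2*P*K⁻¹^2*P⁻¹^2 + (1/8)*S^3*K⁻¹^3*S⁻¹*M⁻¹ + (-1/8)*S^3*K⁻¹^3*S⁻¹*P⁻¹) * hiS
      + ((-1/4)*K⁻¹^2*M⁻¹^2 + (-1/8)*C^2*K⁻¹^2*P⁻¹ + (-1/8)*C^3*K⁻¹^2*S⁻¹*P⁻¹ + (1/4)*M*K⁻¹^3*M⁻¹^2 + (-1/4)*M^2*K⁻¹^3*P⁻¹*M⁻¹^2 + (-1/4)*P*K⁻¹^2*P⁻¹*M⁻¹^2 + (1/4)*P*M*K⁻¹^3*P⁻¹*M⁻¹^2 + (1/8)*S*C*K⁻¹^2*P⁻¹ + (1/8)*S^2*K⁻¹^2*P⁻¹) * hiP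
      + ((-1/4)*K⁻¹^2*P⁻¹^2 + (1/4)*K⁻¹^3*M⁻¹ + (-1/4)*K⁻¹^3*P⁻¹ + (-1/8)*C^2*K⁻¹^2*M⁻¹ + (1/8)*C^3*K⁻¹^2*S⁻¹*M⁻¹ + (-1/4)*M*K⁻¹^2*P⁻¹^2*M⁻¹ + (-1/4)*M*K⁻¹^3*P⁻¹*M⁻¹ + (-1/8)*S*C*K⁻¹^2*M⁻¹ + (1/8)*S^2*K⁻¹^2*M⁻¹) * hiM
      + ((1/4)*P*M*K⁻¹^3*P⁻¹^2*M⁻¹^2 + (1/4)*K*M*K⁻¹^3*P⁻¹^2*M⁻¹^2 + (-1/4)*K*P*K⁻¹^3*P⁻¹^2*M⁻¹^2 + (-1/2)*K^2*K⁻¹^3*P⁻¹^2*M⁻¹^2) * hPM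
      + ((-1/16)*K⁻¹^2*M⁻¹ + (1/8)*K⁻¹^2*M⁻¹^2 + (-1/16)*K⁻¹^2*P⁻¹ + (1/8)*K⁻¹^2*P⁻¹^2 + (-1/8)*K⁻¹^3*M⁻¹ + (1/8)*K⁻¹^3*P⁻¹ + (-1/8)*C*K⁻¹^2*S⁻¹*M⁻¹^2 + (1/8)*C*K⁻¹^2*S⁻¹*P⁻¹^2 + (1/8)*C*K⁻¹^3*S⁻¹*M⁻¹ + (1/8)*C*K⁻¹^3*S⁻¹*P⁻¹ + (1/16)*C^2*K⁻¹^2*S⁻¹^2*M⁻¹ + (1/16)*C^2*K⁻¹^2*S⁻¹^2*P⁻¹) * hC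
set_option maxHeartbeats 1000000 in
lemma circ_key_integral (κ : ℝ) (hκ : 0 < κ) (k : ℤ) :
    ∫ x in (0:ℝ)..1, Complex.exp (2*(π:ℂ)*Complex.I*(-(k:ℂ))*x) * circGm κ x
      = ((1/((κ^2 + (2*π*k)^2)^2) : ℝ) : ℂ) := by
  set t : ℂ := ((2*π*k : ℝ) : ℂ) * Complex.I with ht
  set cp : ℂ := (κ:ℂ) - t with hcp_def
  set cm : ℂ := -(κ:ℂ) - t with hcm_def
  set CC : ℂ := ((Real.cosh (κ/2) : ℝ) : ℂ) with hCC
  set SS : ℂ := ((Real.sinh (κ/2) : ℝ) : ℂ) with hSS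
  have htre : t.re = 0 := by simp [ht]
  have hcp : cp ≠ 0 := by
    intro h
    have : cp.re = 0 := by rw [h]; simp
    rw [hcp_def] at this
    simp [Complex.sub_re, htre] at this
    exact hκ.ne' this
  have hcm : cm ≠ 0 := by
    intro h
    have : cm.re = 0 := by rw [h]; simp
    rw [hcm_def] at this
    simp [Complex.sub_re, Complex.neg_re, htre] at this
    exact hκ.ne' this
  -- exp(-t) = 1
  have hexpt : Complex.exp (-t) = 1 := by
    rw [show -t = ((-k : ℤ) : ℂ) * (2*(π:ℂ)*Complex.I) by rw [ht]; push_cast; ring]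
    exact Complex.exp_int_mul_two_pi_mul_I _
  have hCSp : CC + SS = Complex.exp (((κ/2 : ℝ)) : ℂ) := by
    rw [hCC, hSS, ← Complex.ofReal_exp]
    norm_cast
    exact Real.cosh_add_sinh _
  have hCSm : CC - SS = Complex.exp ((-(κ/2) : ℝ) : ℂ) := by
    rw [hCC, hSS, ← Complex.ofReal_exp]
    norm_cast
    exact Real.cosh_sub_sinh _
  have hEcp : Complex.exp cp = (CC + SS) * (CC + SS) := by
    rw [hcp_def, sub_eq_add_neg, Complex.exp_add, hexpt, mul_one,
      show (κ:ℂ) = ((κ/2:ℝ):ℂ) + ((κ/2:ℝ):ℂ) by push_cast; ring, Complex.exp_add, hCSp]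
  have hEcm : Complex.exp cm = (CC - SS) * (CC - SS) := by
    rw [hcm_def, sub_eq_add_neg, Complex.exp_add, hexpt, mul_one,
      show -(κ:ℂ) = ((-(κ/2):ℝ):ℂ) + ((-(κ/2):ℝ):ℂ) by push_cast; ring, Complex.exp_add, hCSm]
  -- coefficients
  set A : ℂ := (SS + (κ:ℂ)/2 * CC)/(4*(κ:ℂ)^3*SS^2) with hA
  set B : ℂ := 1/(4*(κ:ℂ)^2*SS) with hB
  -- pointwise rewriting of the integrand
  have hfun : Set.EqOn (fun x : ℝ => Complex.exp (2*(π:ℂ)*Complex.I*(-(k:ℂ))*x) * circGm κ x)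
      (fun x : ℝ => ((A/2 + B/4) * (CC - SS)) * Complex.exp (cp * x)
        + (-(B/2) * (CC - SS)) * ((x:ℂ) * Complex.exp (cp * x))
        + ((A/2 - B/4) * (CC + SS)) * Complex.exp (cm * x)
        + ((B/2) * (CC + SS)) * ((x:ℂ) * Complex.exp (cm * x))) (Set.uIcc 0 1) := by
    intro x _
    have hUV : Complex.exp (cp * x) = Complex.exp ((κ:ℂ) * x) * Complex.exp (-(t * x)) := by
      rw [← Complex.exp_add]; congr 1; rw [hcp_def]; ring
    have hUV' : Complex.exp (cm * x) = Complex.exp (-((κ:ℂ) * x)) * Complex.exp (-(t * x)) := by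
      rw [← Complex.exp_add]; congr 1; rw [hcm_def]; ring
    have hV : Complex.exp (2*(π:ℂ)*Complex.I*(-(k:ℂ))*x) = Complex.exp (-(t * x)) := by
      congr 1; rw [ht]; push_cast; ring
    have hch : Complex.exp ((κ:ℂ) * ((x:ℂ) - 1/2))
        = Complex.exp ((κ:ℂ) * x) * (CC - SS) := by
      rw [hCSm, ← Complex.exp_add]; congr 1; push_cast; ring
    have hch' : Complex.exp (-((κ:ℂ) * ((x:ℂ) - 1/2)))
        = Complex.exp (-((κ:ℂ) * x)) * (CC + SS) := by
      rw [hCSp, ← Complex.exp_add]; congr 1; push_cast; ring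
    have hcosh : ∀ z : ℂ, Complex.cosh z = (Complex.exp z + Complex.exp (-z))/2 := fun z => rfl
    have hsinh : ∀ z : ℂ, Complex.sinh z = (Complex.exp z - Complex.exp (-z))/2 := fun z => rfl
    have hCC' : Complex.cosh ((κ:ℂ)/2) = CC := by
      rw [hCC, Complex.ofReal_cosh]; norm_cast
    have hSS' : Complex.sinh ((κ:ℂ)/2) = SS := by
      rw [hSS, Complex.ofReal_sinh]; norm_cast
    show Complex.exp (2*(π:ℂ)*Complex.I*(-(k:ℂ))*x) * circGm κ x = _
    unfold circGm
    push_cast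
    rw [hV, hcosh ((κ:ℂ) * ((x:ℂ) - 1/2)), hsinh ((κ:ℂ) * ((x:ℂ) - 1/2)), hch, hch',
      hUV, hUV', hCC', hSS', hA, hB]
    ring
  rw [intervalIntegral.integral_congr hfun]
  have c1 : Continuous fun x : ℝ => Complex.exp (cp * x) :=
    Complex.continuous_exp.comp (continuous_const.mul Complex.continuous_ofReal)
  have c2 : Continuous fun x : ℝ => (x:ℂ) * Complex.exp (cp * x) :=
    Complex.continuous_ofReal.mul c1
  have c3 : Continuous fun x : ℝ => Complex.exp (cm * x) :=
    Complex.continuous_exp.comp (continuous_const.mul Complex.continuous_ofReal)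
  have c4 : Continuous fun x : ℝ => (x:ℂ) * Complex.exp (cm * x) :=
    Complex.continuous_ofReal.mul c3
  rw [intervalIntegral.integral_add ((((continuous_const.fun_mul c1).fun_add
          (continuous_const.fun_mul c2)).fun_add (continuous_const.fun_mul c3)).intervalIntegrable 0 1)
        ((continuous_const.fun_mul c4).intervalIntegrable 0 1),
      intervalIntegral.integral_add (((continuous_const.fun_mul c1).fun_add
          (continuous_const.fun_mul c2)).intervalIntegrable 0 1)
        ((continuous_const.fun_mul c3).intervalIntegrable 0 1),
      intervalIntegral.integral_add ((continuous_const.fun_mul c1).intervalIntegrable 0 1)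
        ((continuous_const.fun_mul c2).intervalIntegrable 0 1),
      intervalIntegral.integral_const_mul, intervalIntegral.integral_const_mul,
      intervalIntegral.integral_const_mul, intervalIntegral.integral_const_mul]
  have e1 : ∫ x in (0:ℝ)..1, Complex.exp (cp * x) = (Complex.exp cp - 1)/cp := by
    simpa using integral_exp_mul_complex hcp (a := 0) (b := 1)
  have e3 : ∫ x in (0:ℝ)..1, Complex.exp (cm * x) = (Complex.exp cm - 1)/cm := by
    simpa using integral_exp_mul_complex hcm (a := 0) (b := 1)
  rw [e1, e3, integral_x_mul_cexp cp hcp, integral_x_mul_cexp cm hcm, hEcp, hEcm]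
  -- final algebra
  have hK0 : (κ:ℂ) ≠ 0 := by exact_mod_cast hκ.ne'
  have hS0 : SS ≠ 0 := by
    rw [hSS]
    exact_mod_cast Real.sinh_ne_zero.mpr (by positivity)
  have hC2 : CC^2 = SS^2 + 1 := by
    rw [hCC, hSS]
    push_cast
    exact Complex.cosh_sq _
  have halg := circ_alg_key (κ:ℂ) t cp cm SS CC hK0 hS0 hcp hcm hcp_def hcm_def hC2
  have hRHS : ((1/((κ^2 + (2*π*k)^2)^2) : ℝ) : ℂ) = 1/(((κ:ℂ))^2 - t^2)^2 := by
    push_cast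
    rw [ht]
    congr 1
    push_cast
    rw [show ((2:ℂ)*π*k*Complex.I)^2 = -(2*(π:ℂ)*k)^2 by
      rw [mul_pow]; rw [Complex.I_sq]; ring]
    ring
  rw [hRHS]
  rw [hA, hB]
  linear_combination halg

/-- The circular Matérn covariance of order 2. -/
theorem circular_matern_order_two (κ θ : ℝ) (hκ : 0 < κ) (hθ : θ ∈ Set.Icc (0:ℝ) 1) :
    (∑' k : ℤ, Complex.exp (Complex.I * (2 * π * k * θ)) / (((κ^2 + (2 * π * k)^2)^2 : ℝ) : ℂ))
      = (((Real.sinh (κ/2) + (κ/2) * Real.cosh (κ/2)) / (4 * κ^3 * (Real.sinh (κ/2))^2)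
            * Real.cosh (κ * (θ - 1/2))
          - 1 / (4 * κ^2 * Real.sinh (κ/2)) * (θ - 1/2) * Real.sinh (κ * (θ - 1/2)) : ℝ) : ℂ) := by
  haveI : Fact (0 < (1:ℝ)) := ⟨one_pos⟩
  set F : C(AddCircle (1:ℝ), ℂ) :=
    ⟨AddCircle.liftIco 1 0 (circGm κ),
      AddCircle.liftIco_zero_continuous (circGm_period κ) (circGm_cont κ).continuousOn⟩ with hF
  have hcoeff : ∀ n : ℤ, fourierCoeff (⇑F) n = ((1/((κ^2 + (2*π*n)^2)^2) : ℝ) : ℂ) := by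
    intro n
    have h0 : fourierCoeff (⇑F) n = fourierCoeff (AddCircle.liftIco 1 0 (circGm κ)) n := rfl
    rw [h0, fourierCoeff_liftIco_eq, fourierCoeffOn_eq_integral]
    rw [← circ_key_integral κ hκ n]
    norm_num
    refine intervalIntegral.integral_congr fun x _ => ?_
    rw [← Complex.exp_conj]
    congr 1
    simp [map_mul, map_ofNat, Complex.conj_I, Complex.conj_ofReal]
  have hsummable : Summable (fourierCoeff (⇑F)) := by
    apply Summable.of_norm_bounded_eventually (g := fun n : ℤ => 1/(n:ℝ)^4)
      (Real.summable_one_div_int_pow.mpr (by norm_num))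
    filter_upwards [Filter.eventually_cofinite_ne 0] with n hn
    rw [hcoeff n]
    have hn2 : (1:ℝ) ≤ (n:ℝ)^2 := by
      have h1 : (1:ℤ) ≤ |n| := Int.one_le_abs hn
      have h2 : (1:ℝ) ≤ |(n:ℝ)| := by exact_mod_cast h1
      nlinarith [abs_nonneg (n:ℝ), _root_.sq_abs (n:ℝ)]
    have hpos : 0 < κ^2 + (2*π*n)^2 := by
      have h5 : 0 < κ^2 := by positivity
      nlinarith [sq_nonneg (2*π*(n:ℝ))]
    have h4 : (0:ℝ) ≤ 4*π^2 - 1 := by nlinarith [Real.pi_gt_three]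
    have h3 : (n:ℝ)^2 ≤ κ^2 + (2*π*n)^2 := by
      nlinarith [mul_nonneg h4 (sq_nonneg (n:ℝ)), sq_nonneg κ]
    have hb : ((n:ℝ)^2)^2 ≤ (κ^2 + (2*π*n)^2)^2 := pow_le_pow_left₀ (sq_nonneg (n:ℝ)) h3 2
    have hb2 : (n:ℝ)^4 ≤ (κ^2 + (2*π*n)^2)^2 := by
      calc (n:ℝ)^4 = ((n:ℝ)^2)^2 := by ring
        _ ≤ _ := hb
    have hn4 : (0:ℝ) < (n:ℝ)^4 := by nlinarith [hn2]
    rw [Complex.norm_real, Real.norm_eq_abs, _root_.abs_of_nonneg (by positivity)]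
    exact one_div_le_one_div_of_le hn4 hb2
  have hsum := has_pointwise_sum_fourier_series_of_summable hsummable (θ : AddCircle (1:ℝ))
  have hFθ : F (θ : AddCircle (1:ℝ)) = circGm κ θ := by
    rcases eq_or_lt_of_le hθ.2 with h1 | h1
    · have : (θ : AddCircle (1:ℝ)) = ((0 : ℝ) : AddCircle (1:ℝ)) := by
        rw [h1]
        norm_cast
        simp
      rw [this]
      show AddCircle.liftIco 1 0 (circGm κ) _ = _
      rw [AddCircle.liftIco_zero_coe_apply (by constructor <;> norm_num)]
      rw [circGm_period, h1]
    · show AddCircle.liftIco 1 0 (circGm κ) _ = _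
      exact AddCircle.liftIco_zero_coe_apply ⟨hθ.1, h1⟩
  have hterm : ∀ n : ℤ, Complex.exp (Complex.I * (2 * π * n * θ)) / (((κ^2 + (2 * π * n)^2)^2 : ℝ) : ℂ)
      = fourierCoeff (⇑F) n • fourier n (θ : AddCircle (1:ℝ)) := by
    intro n
    rw [hcoeff n, smul_eq_mul, fourier_coe_apply]
    rw [show 2 * (π:ℂ) * Complex.I * n * θ / ((1:ℝ):ℂ) = Complex.I * (2 * π * n * θ) by
      push_cast; ring]
    push_cast
    ring
  calc (∑' n : ℤ, Complex.exp (Complex.I * (2 * π * n * θ)) / (((κ^2 + (2 * π * n)^2)^2 : ℝ) : ℂ))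
      = ∑' n : ℤ, fourierCoeff (⇑F) n • fourier n (θ : AddCircle (1:ℝ)) := tsum_congr hterm
    _ = F (θ : AddCircle (1:ℝ)) := hsum.tsum_eq
    _ = circGm κ θ := hFθ
    _ = _ := rfl
end

section
/- Let n ≥ 1 be an integer, 0 < a < 1/2, and β = (1 + √(1−4a²))/(2a). Then for any integer j with 0 ≤ j ≤ n, (1/n) ∑_{k=1}^{n} e^{i(2π/n)j(k−1)} / (1 − 2a cos((2π/n)(k−1))) = (1/(tanh(log β) · sinh(n log β / 2))) · cosh( n log β · (j/n − 1/2) ). -/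
set_option maxHeartbeats 1000000
open Real Complex

lemma car1_sum_exp_eq (n : ℕ) (hn : 1 ≤ n) (r : ℤ) :
    ∑ k ∈ Finset.range n, Complex.exp (Complex.I * (2 * π / n * r * k)) =
      if (n : ℤ) ∣ r then (n : ℂ) else 0 := by
  have hn0 : (n : ℂ) ≠ 0 := Nat.cast_ne_zero.2 (by omega)
  have hx : ∀ k : ℕ, Complex.exp (Complex.I * (2 * π / n * r * k)) =
      (Complex.exp (Complex.I * (2 * π / n * r))) ^ k := by
    intro k
    rw [← Complex.exp_nat_mul]
    ring_nf
  simp only [hx]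
  by_cases hdvd : (n : ℤ) ∣ r
  · obtain ⟨t, ht⟩ := hdvd
    have h1 : Complex.I * (2 * π / n * r) = t * (2 * π * Complex.I) := by
      have hr : (r : ℂ) = n * t := by exact_mod_cast congrArg (Int.cast : ℤ → ℂ) ht
      field_simp [hr]
      linear_combination hr
    rw [h1, Complex.exp_int_mul_two_pi_mul_I]
    simp only [one_pow, Finset.sum_const, Finset.card_range, nsmul_eq_mul, mul_one]
    rw [if_pos ⟨t, ht⟩]
  · have hxn : (Complex.exp (Complex.I * (2 * π / n * r))) ^ n = 1 := by
      rw [← Complex.exp_nat_mul]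
      have h1 : (n : ℂ) * (Complex.I * (2 * π / n * r)) = r * (2 * π * Complex.I) := by
        field_simp
      rw [h1, Complex.exp_int_mul_two_pi_mul_I]
    have hx1 : Complex.exp (Complex.I * (2 * π / n * r)) ≠ 1 := by
      intro h
      rw [Complex.exp_eq_one_iff] at h
      obtain ⟨m, hm⟩ := h
      apply hdvd
      have hπ : (π : ℂ) ≠ 0 := Complex.ofReal_ne_zero.2 Real.pi_ne_zero
      have hc : (r : ℂ) = m * n := by
        field_simp at hm
        have h2 : (2 * (π:ℂ) * Complex.I) * r = (2 * (π:ℂ) * Complex.I) * (m * n) := by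
          linear_combination (2 * (π:ℂ) * Complex.I) * hm
        exact mul_left_cancel₀
          (mul_ne_zero (mul_ne_zero two_ne_zero hπ) Complex.I_ne_zero) h2
      have : r = m * n := by exact_mod_cast hc
      exact ⟨m, by linarith⟩
    have hg := geom_sum_mul (Complex.exp (Complex.I * (2 * π / n * r))) n
    rw [hxn, sub_self] at hg
    rw [if_neg hdvd]
    rcases mul_eq_zero.1 hg with h | h
    · exact h
    · exact absurd h (sub_ne_zero.2 hx1)

/-- Closed form for the lag-`j` covariance of the circular CAR(1) model in
hyperbolic functions. The sum over `k = 1, …, n` with argument `k − 1` is written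
as a sum over `k ∈ Finset.range n`. -/
theorem car1_covariance_closed_form (n : ℕ) (hn : 1 ≤ n) (a : ℝ) (ha : 0 < a) (ha' : a < 1/2)
    (j : ℤ) (hj0 : 0 ≤ j) (hjn : j ≤ n) :
    let β : ℝ := (1 + Real.sqrt (1 - 4*a^2)) / (2*a)
    (1 / (n : ℂ)) * ∑ k ∈ Finset.range n,
        Complex.exp (Complex.I * (2 * π / n * j * k))
          / ((1 - 2*a*Real.cos (2 * π / n * k) : ℝ) : ℂ)
      = ((1 / (Real.tanh (Real.log β) * Real.sinh (n * Real.log β / 2))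
          * Real.cosh (n * Real.log β * ((j : ℝ)/n - 1/2)) : ℝ) : ℂ) := by
  intro β
  have hβdef : β = (1 + Real.sqrt (1 - 4*a^2)) / (2*a) := rfl
  have hn0C : (n : ℂ) ≠ 0 := Nat.cast_ne_zero.2 (by omega)
  -- J := j.toNat
  set J := j.toNat with hJdef
  have hJ : (J : ℤ) = j := Int.toNat_of_nonneg hj0
  have hJn : J ≤ n := Int.toNat_le.2 hjn
  have hJC : (J : ℂ) = (j : ℂ) := by exact_mod_cast congrArg (Int.cast : ℤ → ℂ) hJ
  -- facts about β
  have ha2 : 0 < 1 - 4*a^2 := by nlinarith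
  have hs : 0 < Real.sqrt (1 - 4*a^2) := Real.sqrt_pos.2 ha2
  have hs2 : Real.sqrt (1 - 4*a^2)^2 = 1 - 4*a^2 := Real.sq_sqrt ha2.le
  have hβ1 : 1 < β := by
    rw [hβdef, lt_div_iff₀ (by linarith)]
    linarith
  have hβ0 : 0 < β := lt_trans one_pos hβ1
  have hquad : a*β^2 + a = β := by
    rw [hβdef]
    field_simp
    nlinarith [hs2, Real.sq_sqrt (show (0:ℝ) ≤ 1 - a^2*4 by nlinarith)]
  have haβ : a*(β + β⁻¹) = 1 := by
    field_simp
    linear_combination hquad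
  have hβn1 : 1 < β^n := one_lt_pow₀ hβ1 (by omega)
  have hδ0 : 0 < β - β⁻¹ := by
    have : β⁻¹ < 1 := inv_lt_one_of_one_lt₀ hβ1
    linarith
  set g : ℝ := a*(β - β⁻¹)*(β^n - 1) with hgdef
  have hg0 : 0 < g := by
    apply mul_pos (mul_pos ha hδ0)
    linarith
  set c1 : ℝ := 1/g with hc1def
  set c2 : ℝ := β/g with hc2def
  -- complex versions
  have haβC : (a:ℂ)*((β:ℂ) + (β:ℂ)⁻¹) = 1 := by
    have := congrArg (Complex.ofReal) haβ
    push_cast at this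
    exact this
  have hββC : (β:ℂ) * (β:ℂ)⁻¹ = 1 := mul_inv_cancel₀ (by exact_mod_cast hβ0.ne')
  have hgC : (g:ℂ) = (a:ℂ)*((β:ℂ)-(β:ℂ)⁻¹)*((β:ℂ)^n-1) := by
    rw [hgdef]; push_cast; ring
  have hgC0 : (g:ℂ) ≠ 0 := Complex.ofReal_ne_zero.2 hg0.ne'
  have hc1C : (c1:ℂ)*(g:ℂ) = 1 := by
    rw [hc1def]; push_cast
    field_simp
  have hc2C : (c2:ℂ)*(g:ℂ) = (β:ℂ) := by
    rw [hc2def]; push_cast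
    field_simp
  -- the coefficient function
  set F : ℕ → ℂ := fun m => (c1:ℂ)*(β:ℂ)^(n-1-m) + (c2:ℂ)*(β:ℂ)^m with hFdef
  -- Step 1 : per-k expansion
  have hterm : ∀ k ∈ Finset.range n,
      Complex.exp (Complex.I * (2 * π / n * j * k))
          / ((1 - 2*a*Real.cos (2 * π / n * k) : ℝ) : ℂ)
        = ∑ m ∈ Finset.range n,
            F m * Complex.exp (Complex.I * (2 * π / n * ((j + 1 + (m:ℤ) : ℤ) : ℂ) * k)) := by
    intro k _
    set w : ℂ := Complex.exp (Complex.I * (2 * π / n * k)) with hwdef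
    have hw0 : w ≠ 0 := Complex.exp_ne_zero _
    have hwinv : w * w⁻¹ = 1 := mul_inv_cancel₀ hw0
    have hwn : w ^ n = 1 := by
      rw [hwdef, ← Complex.exp_nat_mul]
      have h1 : (n:ℂ) * (Complex.I * (2 * π / n * k)) = (k:ℤ) * (2 * π * Complex.I) := by
        push_cast
        field_simp
      rw [h1, Complex.exp_int_mul_two_pi_mul_I]
    have hDpos : 0 < 1 - 2*a*Real.cos (2 * π / n * k) := by
      nlinarith [Real.cos_le_one (2 * π / n * k), Real.neg_one_le_cos (2 * π / n * k)]
    have hD0 : ((1 - 2*a*Real.cos (2 * π / n * k) : ℝ) : ℂ) ≠ 0 :=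
      Complex.ofReal_ne_zero.2 hDpos.ne'
    have hcosw : ((Real.cos (2 * π / n * k) : ℝ) : ℂ) = (w + w⁻¹)/2 := by
      rw [Complex.ofReal_cos, Complex.cos, hwdef, ← Complex.exp_neg]
      push_cast
      ring_nf
    have hDval : ((1 - 2*a*Real.cos (2 * π / n * k) : ℝ) : ℂ) = 1 - (a:ℂ)*(w + w⁻¹) := by
      push_cast at hcosw ⊢
      rw [hcosw]
      ring
    have hDw : ((1 - 2*a*Real.cos (2 * π / n * k) : ℝ) : ℂ) * w
        = -(a:ℂ)*(w-(β:ℂ))*(w-(β:ℂ)⁻¹) := by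
      rw [hDval]
      linear_combination (-(a:ℂ))*hwinv + (a:ℂ)*hββC - w*haβC
    set S1 : ℂ := ∑ i ∈ Finset.range n, w^i * (β:ℂ)^(n-1-i) with hS1def
    set G : ℂ := ∑ i ∈ Finset.range n, ((β:ℂ)*w)^i with hGdef
    have hS1 : S1*(w - (β:ℂ)) = 1 - (β:ℂ)^n := by
      have := geom_sum₂_mul w (β:ℂ) n
      rw [hwn] at this
      exact this
    have hG : G*((β:ℂ)*w - 1) = (β:ℂ)^n - 1 := by
      have := geom_sum_mul ((β:ℂ)*w) n
      rw [mul_pow, hwn, mul_one] at this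
      exact this
    have hmain : ((1 - 2*a*Real.cos (2 * π / n * k) : ℝ) : ℂ) * w * (S1 + (β:ℂ)*G) = (g:ℂ) := by
      rw [hgC]
      linear_combination (S1 + (β:ℂ)*G)*hDw - (a:ℂ)*(w-(β:ℂ)⁻¹)*hS1
        - (a:ℂ)*(w-(β:ℂ))*hG + (a:ℂ)*(w-(β:ℂ))*G*hββC
    have hkey : ((1 - 2*a*Real.cos (2 * π / n * k) : ℝ) : ℂ) * w * ((c1:ℂ)*S1 + (c2:ℂ)*G) = 1 := by
      have h2 : ((1 - 2*a*Real.cos (2 * π / n * k) : ℝ) : ℂ) * w * ((c1:ℂ)*S1 + (c2:ℂ)*G) * (g:ℂ)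
          = 1 * (g:ℂ) := by
        linear_combination (((1 - 2*a*Real.cos (2 * π / n * k) : ℝ) : ℂ) * w * S1) * hc1C
          + (((1 - 2*a*Real.cos (2 * π / n * k) : ℝ) : ℂ) * w * G) * hc2C + hmain
      exact mul_right_cancel₀ hgC0 h2
    -- exponentials as powers of w
    have hexpj : Complex.exp (Complex.I * (2 * π / n * j * k)) = w ^ J := by
      rw [hwdef, ← Complex.exp_nat_mul]
      congr 1
      rw [hJC]
      ring
    have hexpm : ∀ m : ℕ, Complex.exp (Complex.I * (2 * π / n * ((j + 1 + (m:ℤ) : ℤ) : ℂ) * k))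
        = w ^ (J + 1 + m) := by
      intro m
      rw [hwdef, ← Complex.exp_nat_mul]
      congr 1
      push_cast
      rw [hJC]
      ring
    rw [hexpj]
    have hsplit : ∀ m ∈ Finset.range n,
        F m * Complex.exp (Complex.I * (2 * π / n * ((j + 1 + (m:ℤ) : ℤ) : ℂ) * k))
        = (w^(J+1)*(c1:ℂ)) * (w^m*(β:ℂ)^(n-1-m)) + (w^(J+1)*(c2:ℂ)) * ((β:ℂ)*w)^m := by
      intro m _
      rw [hexpm m]
      simp only [hFdef]
      rw [show J + 1 + m = (J+1) + m from rfl, pow_add, mul_pow]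
      ring
    have hsum : ∑ m ∈ Finset.range n,
        F m * Complex.exp (Complex.I * (2 * π / n * ((j + 1 + (m:ℤ) : ℤ) : ℂ) * k))
        = w^(J+1) * ((c1:ℂ)*S1 + (c2:ℂ)*G) := by
      rw [Finset.sum_congr rfl hsplit, Finset.sum_add_distrib,
        ← Finset.mul_sum, ← Finset.mul_sum, ← hS1def, ← hGdef]
      ring
    rw [hsum, div_eq_iff hD0]
    linear_combination (-(w^J)) * hkey
  -- Step 2 : swap sums and evaluate
  rw [Finset.sum_congr rfl hterm, Finset.sum_comm]
  have hswap : ∀ m ∈ Finset.range n,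
      (∑ k ∈ Finset.range n,
        F m * Complex.exp (Complex.I * (2 * π / n * ((j + 1 + (m:ℤ) : ℤ) : ℂ) * k)))
      = F m * (if (n:ℤ) ∣ (j + 1 + (m:ℤ)) then (n:ℂ) else 0) := by
    intro m _
    rw [← Finset.mul_sum, car1_sum_exp_eq n hn (j + 1 + (m:ℤ))]
  rw [Finset.sum_congr rfl hswap]
  set m0 : ℕ := if J = n then n - 1 else n - 1 - J with hm0def
  have hm0mem : m0 ∈ Finset.range n := by
    rw [Finset.mem_range, hm0def]
    split <;> omega
  have hdvd0 : (n:ℤ) ∣ (j + 1 + (m0:ℤ)) := by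
    by_cases h : J = n
    · refine ⟨2, ?_⟩
      have hm0 : m0 = n - 1 := by rw [hm0def, if_pos h]
      omega
    · refine ⟨1, ?_⟩
      have hm0 : m0 = n - 1 - J := by rw [hm0def, if_neg h]
      omega
  have huniq : ∀ m ∈ Finset.range n, m ≠ m0 →
      F m * (if (n:ℤ) ∣ (j + 1 + (m:ℤ)) then (n:ℂ) else 0) = 0 := by
    intro m hm hne
    have hmlt : m < n := Finset.mem_range.1 hm
    rw [if_neg, mul_zero]
    rintro ⟨t, ht⟩
    have hnZ : (1:ℤ) ≤ n := by exact_mod_cast hn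
    have hmZ : (m:ℤ) ≤ (n:ℤ) - 1 := by exact_mod_cast Nat.le_sub_one_of_lt hmlt
    have hl : 1 ≤ t := by
      by_contra hc
      push_neg at hc
      have h0 : t ≤ 0 := by omega
      nlinarith
    have hr : t ≤ 2 := by
      by_contra hc
      push_neg at hc
      have h3 : 3 ≤ t := by omega
      nlinarith
    interval_cases t
    · by_cases h : J = n
      · have hm0 : m0 = n - 1 := by rw [hm0def, if_pos h]
        omega
      · have hm0 : m0 = n - 1 - J := by rw [hm0def, if_neg h]
        omega
    · by_cases h : J = n
      · have hm0 : m0 = n - 1 := by rw [hm0def, if_pos h]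
        omega
      · have hm0 : m0 = n - 1 - J := by rw [hm0def, if_neg h]
        omega
  rw [Finset.sum_eq_single_of_mem m0 hm0mem huniq, if_pos hdvd0]
  have hFm0 : F m0 = (((β^J + β^(n-J))/g : ℝ) : ℂ) := by
    by_cases h : J = n
    · have hm0 : m0 = n - 1 := by rw [hm0def, if_pos h]
      simp only [hFdef, hm0]
      rw [show n - 1 - (n - 1) = 0 from by omega, pow_zero,
        show n - J = 0 from by omega, pow_zero]
      have hpow : (β:ℂ)^n = (β:ℂ)*(β:ℂ)^(n-1) := by
        conv_lhs => rw [show n = (n-1)+1 from by omega]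
        rw [pow_succ]
        ring
      rw [hc1def, hc2def, h]
      push_cast
      rw [hpow]
      field_simp
      ring
    · have hm0 : m0 = n - 1 - J := by rw [hm0def, if_neg h]
      simp only [hFdef, hm0]
      rw [show n - 1 - (n - 1 - J) = J from by omega]
      have hpow : (β:ℂ)^(n-J) = (β:ℂ)*(β:ℂ)^(n-1-J) := by
        conv_lhs => rw [show n - J = (n-1-J)+1 from by omega]
        rw [pow_succ]
        ring
      rw [hc1def, hc2def]
      push_cast
      rw [hpow]
      field_simp
  rw [hFm0]
  have hcancel : 1/(n:ℂ) * ((((β^J + β^(n-J))/g : ℝ) : ℂ) * (n:ℂ))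
      = (((β^J + β^(n-J))/g : ℝ) : ℂ) := by
    field_simp
  rw [hcancel]
  -- Step 3 : real hyperbolic identity
  congr 1
  symm
  have hβ0' : 0 < β := hβ0
  set L := Real.log β with hLdef
  have heL : Real.exp L = β := Real.exp_log hβ0
  have hn0R : (n:ℝ) ≠ 0 := Nat.cast_ne_zero.2 (by omega)
  have hJR : ((J:ℕ):ℝ) = (j:ℝ) := by exact_mod_cast congrArg (Int.cast : ℤ → ℝ) hJ
  set t := Real.exp ((n:ℝ)*L/2) with htdef
  have ht0 : 0 < t := Real.exp_pos _
  have ht2 : t^2 = β^n := by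
    rw [htdef, sq, ← Real.exp_add, show (n:ℝ)*L/2 + (n:ℝ)*L/2 = (n:ℝ)*L from by ring,
      Real.exp_nat_mul, heL]
  have harg : (n:ℝ) * L * ((j:ℝ)/n - 1/2) = J*L - (n:ℝ)*L/2 := by
    rw [← hJR]
    field_simp
  have hexpJ : Real.exp ((J:ℝ)*L) = β^J := by rw [Real.exp_nat_mul, heL]
  have hcosh : Real.cosh ((J:ℝ)*L - (n:ℝ)*L/2) = (β^J/t + t/β^J)/2 := by
    rw [Real.cosh_eq, neg_sub, Real.exp_sub, Real.exp_sub, hexpJ]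
  have hsinh : Real.sinh ((n:ℝ)*L/2) = (t - 1/t)/2 := by
    rw [Real.sinh_eq, Real.exp_neg]
    ring
  have htanh : Real.tanh L = (β - β⁻¹)/(β + β⁻¹) := by
    rw [Real.tanh_eq_sinh_div_cosh, Real.sinh_eq, Real.cosh_eq, Real.exp_neg, heL]
    field_simp
  have hpowJ : β^J * β^(n-J) = β^n := by
    rw [← pow_add]
    congr 1
    omega
  have hβJ0 : (0:ℝ) < β^J := pow_pos hβ0 J
  have hsum0 : 0 < β + β⁻¹ := by positivity
  have ht1 : 1 < t := by nlinarith [ht2, hβn1]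
  have hS0 : 0 < (t - 1/t)/2 := by
    have : 1/t < 1 := by rw [div_lt_one ht0]; linarith
    linarith
  have hT0 : 0 < (β - β⁻¹)/(β + β⁻¹) := div_pos hδ0 hsum0
  rw [harg, hcosh, hsinh, htanh]
  rw [one_div, inv_mul_eq_div, div_eq_div_iff (by positivity) hg0.ne']
  rw [hgdef]
  clear_value β
  field_simp
  linear_combination (-β*(β^2-1)*((β^J)^2+1)) * ht2
    + (-β*(β^2-1)*(t^2-1)) * hpowJ
    + (((β^J)^2+t^2)*(β^2-1)*(β^n-1)) * hquad
end

section
/- Let n ≥ 1, 0 < a < 1/2, β = (1+√(1−4a²))/(2a), and x = (√(1+2a) − √(1−2a))/2. Then for any integer j with 0 ≤ j ≤ n, (1/n) ∑_{k=1}^{n} e^{i(2π/n)j(k−1)} / (1 − 2a cos((2π/n)(k−1))) = (β^{n−j} + β^{j}) / ( x² (1 − β^n)(1 − β²) ). -/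
open Real Complex Finset

private lemma sum_zpow_aux {n : ℕ} (hn : 1 ≤ n) {ω : ℂ} (hω : IsPrimitiveRoot ω n) (m : ℤ) :
    ∑ k ∈ range n, ω ^ (m * (k : ℤ)) = if (n : ℤ) ∣ m then (n : ℂ) else 0 := by
  have hωn : ω ^ (n : ℕ) = 1 := hω.pow_eq_one
  by_cases h : (n : ℤ) ∣ m
  · rw [if_pos h]
    have h1 : ω ^ m = 1 := (hω.zpow_eq_one_iff_dvd m).mpr h
    have : ∀ k ∈ range n, ω ^ (m * (k : ℤ)) = 1 := by
      intro k _
      rw [zpow_mul, h1, one_zpow]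
    rw [Finset.sum_congr rfl this]
    simp
  · rw [if_neg h]
    have h1 : ω ^ m ≠ 1 := fun hh => h ((hω.zpow_eq_one_iff_dvd m).mp hh)
    have h2 : ∀ k ∈ range n, ω ^ (m * (k : ℤ)) = (ω ^ m) ^ k := by
      intro k _
      rw [zpow_mul, zpow_natCast]
    rw [Finset.sum_congr rfl h2, geom_sum_eq h1]
    have h3 : (ω ^ m) ^ n = 1 := by
      rw [← zpow_natCast (ω ^ m) n, ← zpow_mul, mul_comm, zpow_mul, zpow_natCast, hωn, one_zpow]
    rw [h3, sub_self, zero_div]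

private lemma one_sub_ne_aux {n : ℕ} {c z : ℂ} (hc : c ^ n ≠ 1) (hz : z ^ n = 1) :
    1 - c * z ≠ 0 := by
  intro h
  apply hc
  have hcz : c * z = 1 := by linear_combination -h
  have : (c * z) ^ n = 1 := by rw [hcz, one_pow]
  rw [mul_pow, hz, mul_one] at this
  exact this

private lemma geom_inv_aux {n : ℕ} {c z : ℂ} (hc : c ^ n ≠ 1) (hz : z ^ n = 1) :
    (1 - c * z)⁻¹ = (∑ m ∈ range n, (c * z) ^ m) / (1 - c ^ n) := by
  have h1 : 1 - c * z ≠ 0 := one_sub_ne_aux hc hz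
  have h2 : (1 : ℂ) - c ^ n ≠ 0 := fun h => hc (by linear_combination -h)
  rw [eq_div_iff h2, inv_mul_eq_div, div_eq_iff h1]
  have := geom_sum_mul (c * z) n
  rw [mul_pow, hz, mul_one] at this
  linear_combination this

private lemma int_dvd_iff_aux {n : ℤ} (hn : 0 < n) {e : ℤ} (h0 : -n < e) (h2 : e < 2 * n) :
    (n ∣ e) ↔ (e = 0 ∨ e = n) := by
  constructor
  · rintro ⟨t, ht⟩
    have ht0 : t = 0 ∨ t = 1 := by
      rcases lt_trichotomy t 0 with h | h | h
      · have : n * t ≤ -n := by nlinarith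
        omega
      · left; exact h
      · rcases lt_or_ge t 2 with h' | h'
        · right; omega
        · have : 2 * n ≤ n * t := by nlinarith
          omega
    rcases ht0 with rfl | rfl
    · left; omega
    · right; omega
  · rintro (rfl | rfl)
    · exact dvd_zero n
    · exact dvd_refl _

private lemma ite_sum_aux {n j : ℕ} (hn : 1 ≤ n) (hj : j ≤ n) (C : ℂ) :
    (∑ m ∈ range n, C ^ m * (if (n : ℤ) ∣ ((j : ℤ) + m) then (n : ℂ) else 0))
      + (∑ m ∈ range n, C ^ m * (if (n : ℤ) ∣ ((j : ℤ) - m) then (n : ℂ) else 0))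
      - (if (n : ℤ) ∣ (j : ℤ) then (n : ℂ) else 0) * (1 - C ^ n)
      = (C ^ (n - j) + C ^ j) * n := by
  have hn0 : (0 : ℤ) < n := by exact_mod_cast hn
  have key : ∀ (b : ℕ), b < n →
      (∀ m ∈ range n, ((n : ℤ) ∣ ((j : ℤ) + m)) ↔ m = b) →
      (∑ m ∈ range n, C ^ m * (if (n : ℤ) ∣ ((j : ℤ) + m) then (n : ℂ) else 0))
        = C ^ b * n := by
    intro b hb hiff
    have h1 : ∀ m ∈ range n, C ^ m * (if (n : ℤ) ∣ ((j : ℤ) + m) then (n : ℂ) else 0)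
        = if m = b then C ^ m * n else 0 := by
      intro m hm
      rw [mul_ite, mul_zero]
      exact if_congr (hiff m hm) rfl rfl
    rw [Finset.sum_congr rfl h1, Finset.sum_ite_eq' (range n) b (fun m => C ^ m * n),
      if_pos (mem_range.mpr hb)]
  have key2 : ∀ (b : ℕ), b < n →
      (∀ m ∈ range n, ((n : ℤ) ∣ ((j : ℤ) - m)) ↔ m = b) →
      (∑ m ∈ range n, C ^ m * (if (n : ℤ) ∣ ((j : ℤ) - m) then (n : ℂ) else 0))
        = C ^ b * n := by
    intro b hb hiff
    have h1 : ∀ m ∈ range n, C ^ m * (if (n : ℤ) ∣ ((j : ℤ) - m) then (n : ℂ) else 0)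
        = if m = b then C ^ m * n else 0 := by
      intro m hm
      rw [mul_ite, mul_zero]
      exact if_congr (hiff m hm) rfl rfl
    rw [Finset.sum_congr rfl h1, Finset.sum_ite_eq' (range n) b (fun m => C ^ m * n),
      if_pos (mem_range.mpr hb)]
  rcases Nat.eq_zero_or_pos j with rfl | hj1
  · -- j = 0
    simp only [Nat.cast_zero] at key key2 ⊢
    rw [key 0 (by omega) ?_, key2 0 (by omega) ?_, if_pos (dvd_zero _)]
    · rw [Nat.sub_zero]
      ring
    · intro m hm
      simp only [mem_range] at hm
      rw [zero_sub, dvd_neg,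
        int_dvd_iff_aux hn0 (by omega) (by omega)]
      omega
    · intro m hm
      simp only [mem_range] at hm
      rw [zero_add, int_dvd_iff_aux hn0 (by omega) (by omega)]
      omega
  rcases Nat.eq_or_lt_of_le hj with rfl | hj2
  · -- j = n
    rw [key 0 (by omega) ?_, key2 0 (by omega) ?_, if_pos ⟨1, by omega⟩]
    · rw [Nat.sub_self]
      ring
    · intro m hm
      simp only [mem_range] at hm
      rw [int_dvd_iff_aux hn0 (by omega) (by omega)]
      omega
    · intro m hm
      simp only [mem_range] at hm
      rw [int_dvd_iff_aux hn0 (by omega) (by omega)]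
      omega
  · -- 0 < j < n
    rw [key (n - j) (by omega) ?_, key2 j (by omega) ?_, if_neg ?_]
    · ring
    · rintro ⟨t, ht⟩
      have := (int_dvd_iff_aux hn0 (e := (j : ℤ)) (by omega) (by omega)).mp ⟨t, ht⟩
      omega
    · intro m hm
      simp only [mem_range] at hm
      rw [int_dvd_iff_aux hn0 (by omega) (by omega)]
      omega
    · intro m hm
      simp only [mem_range] at hm
      rw [int_dvd_iff_aux hn0 (by omega) (by omega)]
      omega

private lemma main_complex {n : ℕ} (hn : 1 ≤ n) {j : ℕ} (hj : j ≤ n) {C : ℂ}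
    (hCn : C ^ n ≠ 1) {ω : ℂ} (hω : IsPrimitiveRoot ω n) :
    ∑ k ∈ range n, ω ^ ((j : ℤ) * k) * ((1 - C * ω ^ (k : ℤ))⁻¹ + (1 - C * ω ^ (-(k : ℤ)))⁻¹ - 1)
      = (C ^ (n - j) + C ^ j) * n / (1 - C ^ n) := by
  have hω0 : ω ≠ 0 := hω.ne_zero (by omega)
  have hωn : ω ^ n = 1 := hω.pow_eq_one
  have hCn' : (1 : ℂ) - C ^ n ≠ 0 := fun h => hCn (by linear_combination -h)
  have hz : ∀ k : ℕ, (ω ^ (k : ℤ)) ^ n = 1 := by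
    intro k
    rw [← zpow_natCast (ω ^ (k : ℤ)) n, ← zpow_mul]
    exact (hω.zpow_eq_one_iff_dvd _).mpr ⟨k, by ring⟩
  have hz' : ∀ k : ℕ, (ω ^ (-(k : ℤ))) ^ n = 1 := by
    intro k
    rw [← zpow_natCast (ω ^ (-(k : ℤ))) n, ← zpow_mul]
    exact (hω.zpow_eq_one_iff_dvd _).mpr ⟨-(k : ℤ), by ring⟩
  have e1 : ∀ m k : ℕ, ω ^ ((j : ℤ) * k) * (C * ω ^ (k : ℤ)) ^ m
      = C ^ m * ω ^ (((j : ℤ) + m) * k) := by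
    intro m k
    have h : (j : ℤ) * k + (k : ℤ) * m = ((j : ℤ) + m) * k := by ring
    rw [mul_pow, ← zpow_natCast (ω ^ (k : ℤ)) m, ← zpow_mul, mul_left_comm,
      ← zpow_add₀ hω0, h]
  have e2 : ∀ m k : ℕ, ω ^ ((j : ℤ) * k) * (C * ω ^ (-(k : ℤ))) ^ m
      = C ^ m * ω ^ (((j : ℤ) - m) * k) := by
    intro m k
    have h : (j : ℤ) * k + (-(k : ℤ)) * m = ((j : ℤ) - m) * k := by ring
    rw [mul_pow, ← zpow_natCast (ω ^ (-(k : ℤ))) m, ← zpow_mul, mul_left_comm,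
      ← zpow_add₀ hω0, h]
  have step : ∀ k ∈ range n,
      ω ^ ((j : ℤ) * k) * ((1 - C * ω ^ (k : ℤ))⁻¹ + (1 - C * ω ^ (-(k : ℤ)))⁻¹ - 1)
      = (1 - C ^ n)⁻¹ * ((∑ m ∈ range n, C ^ m * ω ^ (((j : ℤ) + m) * k))
          + (∑ m ∈ range n, C ^ m * ω ^ (((j : ℤ) - m) * k))
          - (1 - C ^ n) * ω ^ ((j : ℤ) * k)) := by
    intro k _
    rw [geom_inv_aux hCn (hz k), geom_inv_aux hCn (hz' k)]
    have h1 : ω ^ ((j : ℤ) * k) * ∑ m ∈ range n, (C * ω ^ (k : ℤ)) ^ m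
        = ∑ m ∈ range n, C ^ m * ω ^ (((j : ℤ) + m) * k) := by
      rw [Finset.mul_sum]
      exact Finset.sum_congr rfl fun m _ => e1 m k
    have h2 : ω ^ ((j : ℤ) * k) * ∑ m ∈ range n, (C * ω ^ (-(k : ℤ))) ^ m
        = ∑ m ∈ range n, C ^ m * ω ^ (((j : ℤ) - m) * k) := by
      rw [Finset.mul_sum]
      exact Finset.sum_congr rfl fun m _ => e2 m k
    rw [← h1, ← h2]
    field_simp
  rw [Finset.sum_congr rfl step, ← Finset.mul_sum]
  rw [Finset.sum_sub_distrib, Finset.sum_add_distrib]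
  rw [Finset.sum_comm (s := range n) (t := range n)
    (f := fun k m => C ^ m * ω ^ (((j : ℤ) + m) * k))]
  rw [Finset.sum_comm (s := range n) (t := range n)
    (f := fun k m => C ^ m * ω ^ (((j : ℤ) - m) * k))]
  have g1 : ∀ m ∈ range n, ∑ k ∈ range n, C ^ m * ω ^ (((j : ℤ) + m) * k)
      = C ^ m * (if (n : ℤ) ∣ ((j : ℤ) + m) then (n : ℂ) else 0) := by
    intro m _
    rw [← Finset.mul_sum, sum_zpow_aux hn hω]
  have g2 : ∀ m ∈ range n, ∑ k ∈ range n, C ^ m * ω ^ (((j : ℤ) - m) * k)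
      = C ^ m * (if (n : ℤ) ∣ ((j : ℤ) - m) then (n : ℂ) else 0) := by
    intro m _
    rw [← Finset.mul_sum, sum_zpow_aux hn hω]
  rw [Finset.sum_congr rfl g1, Finset.sum_congr rfl g2]
  have g3 : ∑ k ∈ range n, (1 - C ^ n) * ω ^ ((j : ℤ) * k)
      = (if (n : ℤ) ∣ (j : ℤ) then (n : ℂ) else 0) * (1 - C ^ n) := by
    rw [← Finset.mul_sum, sum_zpow_aux hn hω, mul_comm]
  rw [g3, ite_sum_aux hn hj C, inv_mul_eq_div]

set_option maxHeartbeats 1000000 in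
/-- Closed form for the lag-`j` covariance of the circular CAR(1) model in terms of
`β = (1+√(1−4a²))/(2a)` and `x = (√(1+2a) − √(1−2a))/2`. -/
theorem car1_covariance_beta_form (n : ℕ) (hn : 1 ≤ n) (a : ℝ) (ha : 0 < a) (ha' : a < 1/2)
    (j : ℕ) (hjn : j ≤ n) :
    let β : ℝ := (1 + Real.sqrt (1 - 4*a^2)) / (2*a)
    let x : ℝ := (Real.sqrt (1 + 2*a) - Real.sqrt (1 - 2*a)) / 2
    (1 / (n : ℂ)) * ∑ k ∈ Finset.range n,
        Complex.exp (Complex.I * (2 * π / n * j * k))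
          / ((1 - 2*a*Real.cos (2 * π / n * k) : ℝ) : ℂ)
      = (((β^(n - j) + β^j) / (x^2 * (1 - β^n) * (1 - β^2)) : ℝ) : ℂ) := by
  intro β x
  have hβdef : β = (1 + Real.sqrt (1 - 4*a^2)) / (2*a) := rfl
  have hxdef : x = (Real.sqrt (1 + 2*a) - Real.sqrt (1 - 2*a)) / 2 := rfl
  clear_value β x
  set s : ℝ := Real.sqrt (1 - 4*a^2) with hsdef
  have h4a : 0 < 1 - 4*a^2 := by nlinarith
  have hs2 : s^2 = 1 - 4*a^2 := Real.sq_sqrt h4a.le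
  have hs0 : 0 < s := Real.sqrt_pos.mpr h4a
  clear_value s
  have hs1 : s < 1 := by nlinarith
  have ha0 : a ≠ 0 := ne_of_gt ha
  have hβ1 : 1 < β := by
    rw [hβdef, lt_div_iff₀ (by linarith)]
    linarith
  have hβ0 : (0:ℝ) < β := by linarith
  have hβne : β ≠ 0 := ne_of_gt hβ0
  have hquad : a * (β^2 + 1) = β := by
    rw [hβdef]
    field_simp
    nlinarith [hs2]
  have hx2 : x^2 = a / β := by
    have e1 : Real.sqrt (1+2*a) ^ 2 = 1 + 2*a := Real.sq_sqrt (by linarith)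
    have e2 : Real.sqrt (1-2*a) ^ 2 = 1 - 2*a := Real.sq_sqrt (by linarith)
    have e3 : Real.sqrt (1+2*a) * Real.sqrt (1-2*a) = s := by
      rw [hsdef, ← Real.sqrt_mul (by linarith)]
      congr 1
      ring
    have hx2' : x^2 = (1 - s)/2 := by
      rw [hxdef]
      nlinarith [e1, e2, e3]
    rw [hx2', hβdef]
    rw [div_div_eq_mul_div]
    rw [div_eq_div_iff (by norm_num) (by linarith)]
    nlinarith [hs2]
  have hβn1 : 1 < β^n := one_lt_pow₀ hβ1 (by omega)
  have hβ21 : 1 < β^2 := one_lt_pow₀ hβ1 (by omega)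
  -- complex setup
  set b : ℂ := ((β : ℝ) : ℂ) with hbdef
  have hbne : b ≠ 0 := Complex.ofReal_ne_zero.mpr hβne
  set C : ℂ := ((β⁻¹ : ℝ) : ℂ) with hCdef
  have hCb : C = b⁻¹ := by rw [hCdef, hbdef, Complex.ofReal_inv]
  have hCn : C ^ n ≠ 1 := by
    intro h
    rw [hCdef, ← Complex.ofReal_pow] at h
    have h' : (β⁻¹)^n = 1 := by exact_mod_cast h
    rw [inv_pow, inv_eq_one] at h'
    linarith
  have hC2 : C ^ 2 ≠ 1 := by
    intro h
    rw [hCdef, ← Complex.ofReal_pow] at h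
    have h' : (β⁻¹)^2 = 1 := by exact_mod_cast h
    rw [inv_pow, inv_eq_one] at h'
    linarith
  have hCn' : (1:ℂ) - C^n ≠ 0 := fun h => hCn (by linear_combination -h)
  have hC2' : (1:ℂ) - C^2 ≠ 0 := fun h => hC2 (by linear_combination -h)
  clear_value b C
  set ω : ℂ := Complex.exp (2 * ↑π * Complex.I / n) with hωdef
  have hω : IsPrimitiveRoot ω n := Complex.isPrimitiveRoot_exp n (by omega)
  have hω0 : ω ≠ 0 := Complex.exp_ne_zero _
  clear_value ω
  have hn0 : (n:ℂ) ≠ 0 := Nat.cast_ne_zero.mpr (by omega)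
  have hz : ∀ k : ℕ, (ω ^ (k : ℤ)) ^ n = 1 := by
    intro k
    rw [← zpow_natCast (ω ^ (k : ℤ)) n, ← zpow_mul]
    exact (hω.zpow_eq_one_iff_dvd _).mpr ⟨k, by ring⟩
  have hz' : ∀ k : ℕ, (ω ^ (-(k : ℤ))) ^ n = 1 := by
    intro k
    rw [← zpow_natCast (ω ^ (-(k : ℤ))) n, ← zpow_mul]
    exact (hω.zpow_eq_one_iff_dvd _).mpr ⟨-(k : ℤ), by ring⟩
  have hωk : ∀ k : ℕ, ω ^ (k:ℤ) = Complex.exp (((2 * π / n * k : ℝ) : ℂ) * Complex.I) := by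
    intro k
    rw [zpow_natCast, hωdef, ← Complex.exp_nat_mul]
    congr 1
    push_cast
    ring
  have hωmk : ∀ k : ℕ, ω ^ (-(k:ℤ)) = Complex.exp (-(((2 * π / n * k : ℝ) : ℂ) * Complex.I)) := by
    intro k
    rw [zpow_neg, hωk, ← Complex.exp_neg]
  have hcos : ∀ k : ℕ, ((Real.cos (2 * π / n * k) : ℝ) : ℂ) * 2 = ω ^ (k:ℤ) + ω ^ (-(k:ℤ)) := by
    intro k
    rw [hωk, hωmk]
    set θ : ℂ := ((2 * π / n * k : ℝ) : ℂ)
    rw [Complex.ofReal_cos]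
    rw [show -(θ*Complex.I) = (-θ)*Complex.I by ring, Complex.exp_mul_I, Complex.exp_mul_I,
      Complex.cos_neg, Complex.sin_neg]
    ring
  have hzz : ∀ k : ℕ, ω^(k:ℤ) * ω^(-(k:ℤ)) = 1 := by
    intro k
    rw [← zpow_add₀ hω0]
    simp
  have hden : ∀ k : ℕ, ((1 - 2*a*Real.cos (2 * π / n * k) : ℝ) : ℂ)
      = (a:ℂ) * b * ((1 - C * ω^(k:ℤ)) * (1 - C * ω^(-(k:ℤ)))) := by
    intro k
    have hq : (a:ℂ) * (b^2 + 1) = b := by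
      rw [hbdef]
      exact_mod_cast congrArg (Complex.ofReal) hquad
    have hc2 : ((Real.cos (2 * π / n * k) : ℝ) : ℂ) = (ω^(k:ℤ) + ω^(-(k:ℤ)))/2 := by
      rw [eq_div_iff (two_ne_zero)]
      exact hcos k
    rw [Complex.ofReal_cos] at hc2
    push_cast at hc2 ⊢
    rw [hc2, hCb]
    linear_combination (-(b⁻¹)) * hq
      + ((a:ℂ)*b - (a:ℂ)*b⁻¹ + (a:ℂ)*(ω^(k:ℤ)+ω^(-(k:ℤ))) - 1) * (mul_inv_cancel₀ hbne)
      + (-((a:ℂ)*b*(b⁻¹)^2)) * (hzz k)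
  have hane : (a:ℂ) ≠ 0 := Complex.ofReal_ne_zero.mpr ha0
  have hexp : ∀ k : ℕ, Complex.exp (Complex.I * (2 * ↑π / ↑n * ↑j * ↑k)) = ω ^ ((j:ℤ) * k) := by
    intro k
    have h : ((j:ℤ) * k) = ((j*k : ℕ) : ℤ) := by push_cast; ring
    rw [h, zpow_natCast, hωdef, ← Complex.exp_nat_mul]
    congr 1
    push_cast
    ring
  have hterm : ∀ k ∈ Finset.range n,
      Complex.exp (Complex.I * (2 * ↑π / ↑n * ↑j * ↑k))
          / ((1 - 2*a*Real.cos (2 * π / n * k) : ℝ) : ℂ)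
      = ((a:ℂ) * b * (1 - C^2))⁻¹ *
        (ω ^ ((j:ℤ) * k) * ((1 - C * ω^(k:ℤ))⁻¹ + (1 - C * ω^(-(k:ℤ)))⁻¹ - 1)) := by
    intro k _
    have hP : 1 - C * ω^(k:ℤ) ≠ 0 := one_sub_ne_aux hCn (hz k)
    have hQ : 1 - C * ω^(-(k:ℤ)) ≠ 0 := one_sub_ne_aux hCn (hz' k)
    have hPQ : (1 - C * ω^(k:ℤ)) + (1 - C * ω^(-(k:ℤ)))
        - (1 - C * ω^(k:ℤ)) * (1 - C * ω^(-(k:ℤ))) = 1 - C^2 := by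
      linear_combination (-(C^2)) * hzz k
    have hsum : ((1 - C * ω^(k:ℤ))⁻¹ + (1 - C * ω^(-(k:ℤ)))⁻¹ - 1)
        * ((1 - C * ω^(k:ℤ)) * (1 - C * ω^(-(k:ℤ)))) = 1 - C^2 := by
      linear_combination (1 - C * ω^(-(k:ℤ))) * inv_mul_cancel₀ hP
        + (1 - C * ω^(k:ℤ)) * inv_mul_cancel₀ hQ + hPQ
    have hsum' : (1 - C * ω^(k:ℤ))⁻¹ + (1 - C * ω^(-(k:ℤ)))⁻¹ - 1
        = (1 - C^2) * ((1 - C * ω^(k:ℤ))⁻¹ * (1 - C * ω^(-(k:ℤ)))⁻¹) := by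
      rw [← mul_inv, eq_mul_inv_iff_mul_eq₀ (mul_ne_zero hP hQ)]
      exact hsum
    rw [hexp k, hden k, hsum']
    rw [div_eq_mul_inv]
    simp only [mul_inv]
    linear_combination (-(ω^((j:ℤ)*k)) * (a:ℂ)⁻¹ * b⁻¹
      * (1 - C * ω^(k:ℤ))⁻¹ * (1 - C * ω^(-(k:ℤ)))⁻¹) * inv_mul_cancel₀ hC2'
  rw [Finset.sum_congr rfl hterm, ← Finset.mul_sum, main_complex hn hjn hCn hω]
  -- nonzero real facts
  have hvne : (1:ℝ) - β^n ≠ 0 := ne_of_lt (by linarith)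
  have hwne : (1:ℝ) - β^2 ≠ 0 := ne_of_lt (by linarith)
  have hvne' : (1:ℝ) - (β⁻¹)^n ≠ 0 := by
    rw [inv_pow]
    intro h
    have : (β^n)⁻¹ = 1 := by linarith
    rw [inv_eq_one] at this
    linarith
  have hwne' : (1:ℝ) - (β⁻¹)^2 ≠ 0 := by
    rw [inv_pow]
    intro h
    have : (β^2)⁻¹ = 1 := by linarith
    rw [inv_eq_one] at this
    linarith
  have hx2ne : x^2 ≠ 0 := by
    rw [hx2]
    positivity
  have hreal : ((β⁻¹)^(n-j) + (β⁻¹)^j) / (a*β*(1-(β⁻¹)^2)*(1-(β⁻¹)^n))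
      = (β^(n-j)+β^j)/(x^2*(1-β^n)*(1-β^2)) := by
    have hu : β^j ≠ 0 := pow_ne_zero _ hβne
    have hv : β^n ≠ 0 := pow_ne_zero _ hβne
    have hpow : β^(n-j) = β^n / β^j := pow_sub₀ β hβne hjn
    have hD1 : a*β*(1-(β:ℝ)⁻¹^2)*(1-β⁻¹^n) ≠ 0 :=
      mul_ne_zero (mul_ne_zero (mul_ne_zero ha0 hβne) hwne') hvne'
    have hD2 : (a/β)*(1-β^n)*(1-β^2) ≠ 0 :=
      mul_ne_zero (mul_ne_zero (div_ne_zero ha0 hβne) hvne) hwne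
    rw [hx2, div_eq_div_iff hD1 hD2]
    simp only [inv_pow]
    rw [hpow]
    field_simp
    ring
  have hcast : (1/(n:ℂ)) * (((a:ℂ)*b*(1-C^2))⁻¹ * ((C^(n-j)+C^j)*n/(1-C^n)))
      = ((((β⁻¹)^(n-j) + (β⁻¹)^j) / (a*β*(1-(β⁻¹)^2)*(1-(β⁻¹)^n)) : ℝ) : ℂ) := by
    rw [hCdef, hbdef]
    push_cast
    field_simp
    try ring
  rw [hcast, hreal]
end

section
/- Let n ≥ 1, 0 < a < 1/2, β = (1+√(1−4a²))/(2a), and set θ = j/n for an integer 0 ≤ j ≤ n. Then (1/n) ∑_{k=1}^{n} e^{i2πj(k−1)/n} / (1 − 2a cos((2π/n)(k−1)))² = n · [ ( (1/2)cosh(n log β /2) + (1/n)coth(log β) sinh(n log β /2) ) / ( tanh²(log β) sinh²(n log β /2) ) ] · cosh( n log β (θ − 1/2) ) − n · [ 1/( tanh²(log β) sinh(n log β /2) ) ] · (θ − 1/2) · sinh( n log β (θ − 1/2) ). -/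
open Real Complex

set_option maxHeartbeats 2000000
open Real Complex Finset

noncomputable def zet (n : ℕ) : ℂ := Complex.exp (2 * (Real.pi:ℂ) * Complex.I / n)


lemma zet_pow_n (n : ℕ) (hn : 1 ≤ n) : (zet n)^n = 1 := by
  rw [zet, ← Complex.exp_nat_mul]
  have h0 : (n:ℂ) ≠ 0 := Nat.cast_ne_zero.2 (by omega)
  rw [show (n:ℂ) * (2 * (Real.pi:ℂ) * Complex.I / n) = 2 * (Real.pi:ℂ) * Complex.I by
    field_simp]
  exact Complex.exp_two_pi_mul_I

lemma zet_pow_eq_one_iff (n : ℕ) (hn : 1 ≤ n) (m : ℕ) :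
    (zet n)^m = 1 ↔ (n:ℤ) ∣ (m:ℤ) := by
  rw [zet, ← Complex.exp_nat_mul, Complex.exp_eq_one_iff]
  have h0 : (n:ℂ) ≠ 0 := Nat.cast_ne_zero.2 (by omega)
  have hpi : (Real.pi:ℂ) ≠ 0 := by exact_mod_cast Real.pi_ne_zero
  have h2 : (2:ℂ) * Real.pi * Complex.I ≠ 0 := by
    simp [Complex.I_ne_zero, hpi]
  constructor
  · rintro ⟨t, ht⟩
    refine ⟨t, ?_⟩
    have hc : (m:ℂ) = n * t := by
      field_simp at ht
      apply mul_right_cancel₀ h2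
      linear_combination (2 * (Real.pi:ℂ) * Complex.I) * ht
    exact_mod_cast hc
  · rintro ⟨t, ht⟩
    refine ⟨t, ?_⟩
    have hm : (m:ℂ) = n * t := by exact_mod_cast ht
    rw [hm]
    field_simp

lemma orth (n : ℕ) (hn : 1 ≤ n) (m : ℕ) :
    ∑ k ∈ range n, ((zet n)^m)^k = if (n:ℤ) ∣ (m:ℤ) then (n:ℂ) else 0 := by
  by_cases h : (n:ℤ) ∣ (m:ℤ)
  · rw [if_pos h, (zet_pow_eq_one_iff n hn m).2 h]
    simp
  · rw [if_neg h]
    have hne : (zet n)^m ≠ 1 := fun hc => h ((zet_pow_eq_one_iff n hn m).1 hc)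
    rw [geom_sum_eq hne]
    rw [← pow_mul, mul_comm m n, pow_mul, zet_pow_n n hn, one_pow]
    simp

-- geometric sum with decreasing exponents
lemma geomd (β : ℂ) (hβ2 : β^2 ≠ 1) (m c : ℕ) :
    (∑ i ∈ range m, β^(c + 2*(m - 1 - i))) = (β^(c+2*m) - β^c)/(β^2 - 1) := by
  have h := Finset.sum_range_reflect (fun i => β^(c + 2*i)) m
  rw [h]
  have : ∀ i, β^(c + 2*i) = β^c * (β^2)^i := by
    intro i; rw [pow_add, pow_mul]
  simp_rw [this]
  rw [← Finset.mul_sum, geom_sum_eq hβ2, ← pow_mul, ← pow_add]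
  have hne : β^2 - 1 ≠ 0 := sub_ne_zero.2 hβ2
  field_simp
  ring

-- per-k decomposition
lemma perk (n : ℕ) (hn : 1 ≤ n) (j : ℕ) (β : ℂ) (hβ : 1 < ‖β‖) (z : ℂ)
    (hz : ‖z‖ = 1) (hzn : z^n = 1) :
    z^(j+1) / ((β - z) * (β*z - 1))
      = z^(j+1) * ((∑ m1 ∈ range n, z^m1 * β^(n-1-m1)) * (∑ m2 ∈ range n, (β*z)^m2))
          / ((β^n - 1)^2) := by
  have hβz : β ≠ z := by
    intro h; rw [h, hz] at hβ; exact lt_irrefl 1 hβ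
  have h1 : β - z ≠ 0 := sub_ne_zero.2 hβz
  have h2 : β*z - 1 ≠ 0 := by
    intro h
    have : ‖β*z‖ = 1 := by rw [sub_eq_zero] at h; rw [h, norm_one]
    rw [norm_mul, hz, mul_one] at this
    rw [this] at hβ; exact lt_irrefl 1 hβ
  have h3 : β^n - 1 ≠ 0 := by
    intro h
    rw [sub_eq_zero] at h
    have : ‖β^n‖ = 1 := by rw [h, norm_one]
    rw [norm_pow] at this
    have h4 : 1 < ‖β‖^n := one_lt_pow₀ hβ (by omega)
    rw [this] at h4; exact lt_irrefl 1 h4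
  have hA : (∑ m1 ∈ range n, z^m1 * β^(n-1-m1)) * (z - β) = z^n - β^n := geom_sum₂_mul z β n
  have hB : (∑ m2 ∈ range n, (β*z)^m2) * (β*z - 1) = (β*z)^n - 1 := geom_sum_mul (β*z) n
  rw [hzn] at hA
  rw [mul_pow, hzn, mul_one] at hB
  rw [div_eq_div_iff (by exact mul_ne_zero h1 h2) (by exact pow_ne_zero 2 h3)]
  linear_combination (z^(j+1)*(β^n-1)) * hA - (z^(j+1)*(∑ m1 ∈ range n, z^m1 * β^(n-1-m1))*(β-z)) * hB



lemma norm_zet (n : ℕ) (hn : 1 ≤ n) : ‖zet n‖ = 1 := by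
  rw [zet, show 2 * (Real.pi:ℂ) * Complex.I / n = ((2*Real.pi/n : ℝ):ℂ) * Complex.I by
    push_cast; ring]
  exact Complex.norm_exp_ofReal_mul_I _

lemma Gsum (n : ℕ) (hn : 1 ≤ n) (j : ℕ) (hj : j < n) (β : ℂ) (hβ : 1 < ‖β‖) :
    ∑ k ∈ range n, ((zet n)^k)^(j+1) / ((β - (zet n)^k) * (β * (zet n)^k - 1))
      = n * (β^j + β^(n-j)) / ((β^n - 1) * (β^2 - 1)) := by
  have hβ2 : β^2 ≠ 1 := by
    intro h
    have : ‖β^2‖ = 1 := by rw [h, norm_one]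
    rw [norm_pow] at this
    nlinarith [hβ]
  have hβn : β^n - 1 ≠ 0 := by
    intro h
    rw [sub_eq_zero] at h
    have h1 : ‖β^n‖ = 1 := by rw [h, norm_one]
    rw [norm_pow] at h1
    have h4 : 1 < ‖β‖^n := one_lt_pow₀ hβ (by omega)
    rw [h1] at h4; exact lt_irrefl 1 h4
  have hβ21 : β^2 - 1 ≠ 0 := sub_ne_zero.2 hβ2
  -- step 1: per-k rewrite
  rw [Finset.sum_congr rfl (fun k hk => perk n hn j β hβ ((zet n)^k)
      (by rw [norm_pow, norm_zet n hn, one_pow])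
      (by rw [← pow_mul, mul_comm, pow_mul, zet_pow_n n hn, one_pow]))]
  rw [← Finset.sum_div]
  -- step 2: expand products
  have expand : ∀ k ∈ range n,
      ((zet n)^k)^(j+1) * ((∑ m1 ∈ range n, ((zet n)^k)^m1 * β^(n-1-m1)) *
        (∑ m2 ∈ range n, (β*(zet n)^k)^m2))
      = ∑ m1 ∈ range n, ∑ m2 ∈ range n,
          β^(n-1-m1) * β^m2 * ((zet n)^(j+1+m1+m2))^k := by
    intro k _
    rw [Finset.sum_mul_sum, Finset.mul_sum]
    refine Finset.sum_congr rfl fun m1 _ => ?_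
    rw [Finset.mul_sum]
    refine Finset.sum_congr rfl fun m2 _ => ?_
    rw [mul_pow]
    ring
  rw [Finset.sum_congr rfl expand]
  rw [Finset.sum_comm]
  have swap2 : ∀ m1 ∈ range n,
      ∑ k ∈ range n, ∑ m2 ∈ range n, β^(n-1-m1) * β^m2 * ((zet n)^(j+1+m1+m2))^k
      = ∑ m2 ∈ range n, β^(n-1-m1) * β^m2 *
          (if (n:ℤ) ∣ ((j+1+m1+m2 : ℕ):ℤ) then (n:ℂ) else 0) := by
    intro m1 _
    rw [Finset.sum_comm]
    refine Finset.sum_congr rfl fun m2 _ => ?_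
    rw [← Finset.mul_sum, orth n hn]
  rw [Finset.sum_congr rfl swap2]
  -- step 3: inner sum evaluation
  have inner : ∀ m1 ∈ range n,
      ∑ m2 ∈ range n, β^(n-1-m1) * β^m2 *
          (if (n:ℤ) ∣ ((j+1+m1+m2 : ℕ):ℤ) then (n:ℂ) else 0)
      = (n:ℂ) * (β^(n-1-m1) * β^(if m1 + j + 1 ≤ n then n-j-1-m1 else 2*n-j-1-m1)) := by
    intro m1 hm1
    have hm1n := Finset.mem_range.1 hm1
    set μ := if m1 + j + 1 ≤ n then n-j-1-m1 else 2*n-j-1-m1 with hμ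
    have hμn : μ < n := by rw [hμ]; split_ifs <;> omega
    rw [Finset.sum_eq_single_of_mem μ (Finset.mem_range.2 hμn)]
    · rw [if_pos, mul_comm]
      rw [hμ]; split_ifs with hc
      · exact ⟨1, by push_cast; omega⟩
      · exact ⟨2, by push_cast; omega⟩
    · intro b hb hbne
      have hbn := Finset.mem_range.1 hb
      rw [if_neg, mul_zero]
      rintro ⟨t, ht⟩
      push_cast at ht
      have hn' : (1:ℤ) ≤ n := by exact_mod_cast hn
      have h1 : 1 ≤ t := by
        by_contra h; push_neg at h
        have h0 : t ≤ 0 := by omega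
        nlinarith
      have h2 : t ≤ 2 := by
        by_contra h; push_neg at h
        have h3 : 3 ≤ t := by omega
        nlinarith [hbn, hm1n, hj]
      rw [hμ] at hbne
      split_ifs at hbne with hc
      · interval_cases t <;> omega
      · interval_cases t <;> omega
  rw [Finset.sum_congr rfl inner]
  rw [← Finset.mul_sum]
  -- step 4: split the sum
  have hsplit : ∑ m1 ∈ range n, β^(n-1-m1) * β^(if m1 + j + 1 ≤ n then n-j-1-m1 else 2*n-j-1-m1)
      = (β^(j+2*(n-j)) - β^j)/(β^2-1) + (β^((n-j)+2*j) - β^(n-j))/(β^2-1) := by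
    rw [show (range n) = range ((n-j)+j) by rw [show (n-j)+j = n by omega]]
    rw [Finset.sum_range_add]
    congr 1
    · rw [← geomd β hβ2 (n-j) j]
      refine Finset.sum_congr rfl fun i hi => ?_
      have hi' := Finset.mem_range.1 hi
      rw [if_pos (by omega), ← pow_add]
      congr 1
      omega
    · rw [← geomd β hβ2 j (n-j)]
      refine Finset.sum_congr rfl fun i hi => ?_
      have hi' := Finset.mem_range.1 hi
      rw [if_neg (by omega), ← pow_add]
      congr 1
      omega
  rw [hsplit]
  have e1 : β^(j+2*(n-j)) = β^n * β^(n-j) := by rw [← pow_add]; congr 1; omega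
  have e2 : β^((n-j)+2*j) = β^n * β^j := by rw [← pow_add]; congr 1; omega
  rw [e1, e2]
  field_simp
  ring


lemma Qne (n : ℕ) (hn : 1 ≤ n) (k : ℕ) (β : ℂ) (hβ : 1 < ‖β‖) :
    (β - (zet n)^k) * (β * (zet n)^k - 1) ≠ 0 := by
  have hz : ‖(zet n)^k‖ = 1 := by rw [norm_pow, norm_zet n hn, one_pow]
  apply mul_ne_zero
  · intro h; rw [sub_eq_zero] at h
    rw [← h] at hz; rw [hz] at hβ; exact lt_irrefl 1 hβ
  · intro h; rw [sub_eq_zero] at h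
    have : ‖β * (zet n)^k‖ = 1 := by rw [h, norm_one]
    rw [norm_mul, hz, mul_one] at this
    rw [this] at hβ; exact lt_irrefl 1 hβ

lemma Ssum (n : ℕ) (hn : 1 ≤ n) (j : ℕ) (hj : j < n) (β : ℂ) (hβ : 1 < ‖β‖) :
    ∑ k ∈ range n, ((zet n)^k)^(j+2) / (((β - (zet n)^k) * (β * (zet n)^k - 1))^2)
      = ((n:ℂ) * (β^j + β^(n-j)) / ((β^n - 1) * (β^2 - 1))
          + β * (((n:ℂ) * ((j:ℂ) * β^(j-1) + ((n-j : ℕ):ℂ) * β^(n-j-1)))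
                  * ((β^n - 1) * (β^2 - 1))
                - (n:ℂ) * (β^j + β^(n-j))
                  * ((n:ℂ) * β^(n-1) * (β^2 - 1) + (β^n - 1) * (2*β)))
              / (((β^n - 1) * (β^2 - 1))^2)) / (1 - β^2) := by
  have hβ2 : β^2 ≠ 1 := by
    intro h
    have : ‖β^2‖ = 1 := by rw [h, norm_one]
    rw [norm_pow] at this; nlinarith [hβ]
  have hβn : β^n - 1 ≠ 0 := by
    intro h; rw [sub_eq_zero] at h
    have h1 : ‖β^n‖ = 1 := by rw [h, norm_one]
    rw [norm_pow] at h1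
    have h4 : 1 < ‖β‖^n := one_lt_pow₀ hβ (by omega)
    rw [h1] at h4; exact lt_irrefl 1 h4
  have hβ21 : β^2 - 1 ≠ 0 := sub_ne_zero.2 hβ2
  have h1mb : (1:ℂ) - β^2 ≠ 0 := fun h => hβ2 (by linear_combination -h)
  have hvne : (β^n - 1) * (β^2 - 1) ≠ 0 := mul_ne_zero hβn hβ21
  set E : ℂ := (((n:ℂ) * ((j:ℂ) * β^(j-1) + ((n-j : ℕ):ℂ) * β^(n-j-1)))
                  * ((β^n - 1) * (β^2 - 1))
                - (n:ℂ) * (β^j + β^(n-j))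
                  * ((n:ℂ) * β^(n-1) * (β^2 - 1) + (β^n - 1) * (2*β)))
              / (((β^n - 1) * (β^2 - 1))^2) with hE
  -- closed form has derivative E
  have hu : HasDerivAt (fun b : ℂ => (n:ℂ) * (b^j + b^(n-j)))
      ((n:ℂ) * ((j:ℂ) * β^(j-1) + ((n-j : ℕ):ℂ) * β^(n-j-1))) β :=
    ((hasDerivAt_pow j β).add (hasDerivAt_pow (n-j) β)).const_mul _
  have hv : HasDerivAt (fun b : ℂ => (b^n - 1) * (b^2 - 1))
      ((n:ℂ) * β^(n-1) * (β^2 - 1) + (β^n - 1) * (2*β)) β := by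
    have h1 := ((hasDerivAt_pow n β).sub_const (1:ℂ)).fun_mul ((hasDerivAt_pow 2 β).sub_const (1:ℂ))
    refine h1.congr_deriv ?_
    ring
  have hg : HasDerivAt (fun b : ℂ => (n:ℂ) * (b^j + b^(n-j)) / ((b^n - 1) * (b^2 - 1))) E β :=
    hE ▸ hu.div hv hvne
  -- sum form has derivative: termwise
  have hfk : ∀ k ∈ range n, HasDerivAt
      (fun b : ℂ => ((zet n)^k)^(j+1) / ((b - (zet n)^k) * (b * (zet n)^k - 1)))
      (-(((zet n)^k)^(j+1) * (2*β*(zet n)^k - ((zet n)^k)^2 - 1))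
        / (((β - (zet n)^k) * (β * (zet n)^k - 1))^2)) β := by
    intro k _
    have hQ := Qne n hn k β hβ
    have hd : HasDerivAt (fun b : ℂ => (b - (zet n)^k) * (b * (zet n)^k - 1))
        (1 * (β * (zet n)^k - 1) + (β - (zet n)^k) * (1 * (zet n)^k)) β :=
      ((hasDerivAt_id β).sub_const _).fun_mul (((hasDerivAt_id β).mul_const _).sub_const 1)
    have h2 := (hasDerivAt_const β (((zet n)^k)^(j+1))).fun_div hd hQ
    refine h2.congr_deriv ?_
    ring
  have hf : HasDerivAt (fun b : ℂ => ∑ k ∈ range n,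
      ((zet n)^k)^(j+1) / ((b - (zet n)^k) * (b * (zet n)^k - 1)))
      (∑ k ∈ range n, -(((zet n)^k)^(j+1) * (2*β*(zet n)^k - ((zet n)^k)^2 - 1))
        / (((β - (zet n)^k) * (β * (zet n)^k - 1))^2)) β :=
    HasDerivAt.fun_sum hfk
  -- the two functions agree near β
  have heq : (fun b : ℂ => ∑ k ∈ range n,
      ((zet n)^k)^(j+1) / ((b - (zet n)^k) * (b * (zet n)^k - 1)))
      =ᶠ[nhds β] (fun b : ℂ => (n:ℂ) * (b^j + b^(n-j)) / ((b^n - 1) * (b^2 - 1))) := by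
    filter_upwards [(isOpen_lt continuous_const continuous_norm).mem_nhds hβ] with b hb
    exact Gsum n hn j hj b hb
  have hDE : (∑ k ∈ range n, -(((zet n)^k)^(j+1) * (2*β*(zet n)^k - ((zet n)^k)^2 - 1))
        / (((β - (zet n)^k) * (β * (zet n)^k - 1))^2)) = E :=
    hf.unique (hg.congr_of_eventuallyEq heq)
  -- algebraic relations
  set S := ∑ k ∈ range n, ((zet n)^k)^(j+2) / (((β - (zet n)^k) * (β * (zet n)^k - 1))^2)
    with hS
  set W := ∑ k ∈ range n, (((zet n)^k)^(j+1) + ((zet n)^k)^(j+3))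
      / (((β - (zet n)^k) * (β * (zet n)^k - 1))^2) with hW
  have eq1 : (β^2+1) * S - β * W = (n:ℂ) * (β^j + β^(n-j)) / ((β^n - 1) * (β^2 - 1)) := by
    rw [hS, hW, Finset.mul_sum, Finset.mul_sum, ← Finset.sum_sub_distrib]
    rw [← Gsum n hn j hj β hβ]
    refine Finset.sum_congr rfl fun k hk => ?_
    have hQ := Qne n hn k β hβ
    rw [mul_div_assoc', mul_div_assoc', div_sub_div_same, div_eq_div_iff (pow_ne_zero 2 hQ) hQ]
    ring
  have eq2 : E = W - 2*β*S := by
    rw [← hDE, hS, hW, Finset.mul_sum, ← Finset.sum_sub_distrib]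
    refine Finset.sum_congr rfl fun k hk => ?_
    have hQ := Qne n hn k β hβ
    field_simp
    ring
  rw [eq_div_iff h1mb]
  linear_combination eq1 - β * eq2


lemma cosid (n : ℕ) (hn : 1 ≤ n) (k : ℕ) (a β : ℝ) (key : a*(β^2+1) = β) (hβ : 1 < β) :
    ((1 - 2*a*Real.cos (2*Real.pi/n*k) : ℝ) : ℂ)
      = (((β:ℂ) - (zet n)^k) * ((β:ℂ)*(zet n)^k - 1)) / ((((β:ℂ))^2+1) * (zet n)^k) := by
  have hz : (zet n)^k = Complex.exp (((2*Real.pi/n*k : ℝ) : ℂ) * Complex.I) := by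
    rw [zet, ← Complex.exp_nat_mul]
    congr 1
    have h0 : (n:ℂ) ≠ 0 := Nat.cast_ne_zero.2 (by omega)
    push_cast
    field_simp
  have hzne : (zet n)^k ≠ 0 := by rw [hz]; exact Complex.exp_ne_zero _
  have hcos : Complex.cos (2*(Real.pi:ℂ)/n*k) = ((zet n)^k + ((zet n)^k)⁻¹) / 2 := by
    rw [show (2*(Real.pi:ℂ)/n*k) = ((2*Real.pi/n*k : ℝ) : ℂ) by push_cast; ring]
    rw [Complex.cos, neg_mul, Complex.exp_neg, ← hz]
  have hb1 : ((β:ℂ))^2 + 1 ≠ 0 := by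
    intro h
    have : ((β^2 + 1 : ℝ) : ℂ) = 0 := by push_cast; linear_combination h
    have h2 : (β^2+1 : ℝ) = 0 := by exact_mod_cast this
    nlinarith
  have keyc : (a:ℂ) * ((β:ℂ)^2+1) = (β:ℂ) := by exact_mod_cast key
  push_cast
  rw [hcos]
  field_simp
  ring_nf
  linear_combination (-((zet n)^(k*2)) - 1) * keyc

lemma realside (n j : ℕ) (hn : 1 ≤ n) (hj : j < n) (β : ℝ) (hβ : 1 < β) :
    (1/(n:ℝ)) * ((β^2+1)^2 *
      (((n:ℝ) * (β^j + β^(n-j)) / ((β^n-1)*(β^2-1))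
        + β * (((n:ℝ)*((j:ℝ)*β^(j-1) + ((n-j:ℕ):ℝ)*β^(n-j-1))) * ((β^n-1)*(β^2-1))
            - (n:ℝ)*(β^j+β^(n-j))*((n:ℝ)*β^(n-1)*(β^2-1) + (β^n-1)*(2*β)))
          / (((β^n-1)*(β^2-1))^2)) / (1-β^2)))
    = (n:ℝ) * (((1/2) * Real.cosh (n * Real.log β / 2)
          + (1/n) * (Real.cosh (Real.log β) / Real.sinh (Real.log β))
              * Real.sinh (n * Real.log β / 2))
        / ((Real.tanh (Real.log β))^2 * (Real.sinh (n * Real.log β / 2))^2))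
        * Real.cosh (n * Real.log β * ((j:ℝ)/n - 1/2))
      - (n:ℝ) * (1 / ((Real.tanh (Real.log β))^2 * Real.sinh (n * Real.log β / 2)))
        * ((j:ℝ)/n - 1/2) * Real.sinh (n * Real.log β * ((j:ℝ)/n - 1/2)) := by
  have hβ0 : 0 < β := by linarith
  have hn0 : (n:ℝ) ≠ 0 := Nat.cast_ne_zero.2 (by omega)
  set L := Real.log β with hL
  have hexpL : Real.exp L = β := Real.exp_log hβ0
  have hL0 : 0 < L := Real.log_pos hβ
  set r := Real.exp ((n:ℝ) * L / 2) with hr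
  have hr1 : 1 < r := by
    rw [hr]
    rw [show (1:ℝ) = Real.exp 0 by simp]
    apply Real.exp_lt_exp.2
    positivity
  have hr0 : 0 < r := by linarith
  have hr2 : r^2 = β^n := by
    rw [hr, ← Real.exp_nat_mul]
    · rw [← hexpL, ← Real.exp_nat_mul]
      congr 1
      ring
  have hc1 : Real.cosh ((n:ℝ) * L / 2) = (r^2+1)/(2*r) := by
    rw [Real.cosh_eq, Real.exp_neg, ← hr]
    field_simp
  have hs1 : Real.sinh ((n:ℝ) * L / 2) = (r^2-1)/(2*r) := by
    rw [Real.sinh_eq, Real.exp_neg, ← hr]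
    field_simp
  have hβ0' : β ≠ 0 := ne_of_gt hβ0
  have hcL : Real.cosh L = (β^2 + 1)/(2*β) := by
    rw [Real.cosh_eq, Real.exp_neg, hexpL]
    field_simp
  have hsL : Real.sinh L = (β^2 - 1)/(2*β) := by
    rw [Real.sinh_eq, Real.exp_neg, hexpL]
    field_simp
  have hβ21 : β^2 - 1 ≠ 0 := by nlinarith
  have hβ2p : β^2 + 1 ≠ 0 := by nlinarith
  have htanhL : Real.tanh L = (β^2-1)/(β^2+1) := by
    rw [Real.tanh_eq_sinh_div_cosh, hsL, hcL]
    rw [div_div_div_cancel_right₀]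
    simp [hβ0']
  have hPj : Real.exp ((j:ℝ)*L) = β^j := by rw [← hexpL, ← Real.exp_nat_mul]
  have hbj : (0:ℝ) < β^j := by positivity
  have hbj' : β^j ≠ 0 := ne_of_gt hbj
  have hr0' : r ≠ 0 := ne_of_gt hr0
  have hc2 : Real.cosh ((n:ℝ) * L * ((j:ℝ)/n - 1/2)) = ((β^j)^2 + r^2)/(2*r*β^j) := by
    rw [show (n:ℝ) * L * ((j:ℝ)/n - 1/2) = (j:ℝ)*L - (n:ℝ)*L/2 by field_simp]
    rw [Real.cosh_eq, Real.exp_sub, show -((j:ℝ)*L - (n:ℝ)*L/2) = (n:ℝ)*L/2 - (j:ℝ)*L by ring,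
      Real.exp_sub, hPj, ← hr]
    field_simp
  have hs2 : Real.sinh ((n:ℝ) * L * ((j:ℝ)/n - 1/2)) = ((β^j)^2 - r^2)/(2*r*β^j) := by
    rw [show (n:ℝ) * L * ((j:ℝ)/n - 1/2) = (j:ℝ)*L - (n:ℝ)*L/2 by field_simp]
    rw [Real.sinh_eq, Real.exp_sub, show -((j:ℝ)*L - (n:ℝ)*L/2) = (n:ℝ)*L/2 - (j:ℝ)*L by ring,
      Real.exp_sub, hPj, ← hr]
    field_simp
  have hnj : ((n-j:ℕ):ℝ) = (n:ℝ) - j := by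
    rw [Nat.cast_sub hj.le]
  have e1 : β^(n-j) = r^2 / β^j := by
    rw [hr2, pow_sub₀ β hβ0' hj.le, div_eq_mul_inv]
  have e2 : β^(n-j-1) = r^2 / (β^j * β) := by
    rw [show n-j-1 = n-(j+1) by omega, hr2, pow_sub₀ β hβ0' (by omega), pow_succ, div_eq_mul_inv]
  have e3 : β^(n-1) = r^2 / β := by
    rw [hr2, pow_sub₀ β hβ0' hn, pow_one, div_eq_mul_inv]
  have e4 : (j:ℝ)*β^(j-1) = (j:ℝ)*β^j/β := by
    rcases j with _|i
    · simp
    · rw [show i+1-1 = i by omega]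
      field_simp
      rw [pow_succ]
  have hβn1 : β^n - 1 ≠ 0 := by rw [← hr2]; nlinarith
  have h1mβ : 1 - β^2 ≠ 0 := by nlinarith
  have hr21 : r^2 - 1 ≠ 0 := by nlinarith
  rw [hc1, hs1, hcL, hsL, hc2, hs2, htanhL, e1, e2, e3, e4, hnj, ← hr2]
  field_simp
  ring

lemma main_lt (n : ℕ) (hn : 1 ≤ n) (a : ℝ) (j : ℕ) (hj : j < n) (β : ℝ)
    (hβ : 1 < β) (key : a*(β^2+1) = β) :
    (1 / (n : ℂ)) * ∑ k ∈ Finset.range n,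
        Complex.exp (Complex.I * (2 * (Real.pi:ℝ) / n * j * k))
          / (((1 - 2*a*Real.cos (2 * Real.pi / n * k))^2 : ℝ) : ℂ)
      = (((n : ℝ) * (((1/2) * Real.cosh (n * Real.log β / 2)
              + (1/n) * (Real.cosh (Real.log β) / Real.sinh (Real.log β))
                  * Real.sinh (n * Real.log β / 2))
            / ((Real.tanh (Real.log β))^2 * (Real.sinh (n * Real.log β / 2))^2))
            * Real.cosh (n * Real.log β * ((j:ℝ)/n - 1/2))
          - (n : ℝ) * (1 / ((Real.tanh (Real.log β))^2 * Real.sinh (n * Real.log β / 2)))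
            * ((j:ℝ)/n - 1/2) * Real.sinh (n * Real.log β * ((j:ℝ)/n - 1/2)) : ℝ) : ℂ) := by
  have hn0 : (n:ℂ) ≠ 0 := Nat.cast_ne_zero.2 (by omega)
  have hβc : 1 < ‖(β:ℂ)‖ := by
    rw [Complex.norm_real, Real.norm_eq_abs, abs_of_pos (by linarith)]
    exact hβ
  have hb2c : ((β:ℂ))^2 + 1 ≠ 0 := by
    intro h
    have h1 : ((β^2 + 1 : ℝ) : ℂ) = 0 := by push_cast; linear_combination h
    have h2 : (β^2+1 : ℝ) = 0 := by exact_mod_cast h1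
    nlinarith
  have hterm : ∀ k ∈ Finset.range n,
      Complex.exp (Complex.I * (2 * (Real.pi:ℝ) / n * j * k))
          / (((1 - 2*a*Real.cos (2 * Real.pi / n * k))^2 : ℝ) : ℂ)
      = ((β:ℂ)^2+1)^2 * (((zet n)^k)^(j+2)
          / ((((β:ℂ) - (zet n)^k) * ((β:ℂ) * (zet n)^k - 1))^2)) := by
    intro k hk
    have hexpid : Complex.exp (Complex.I * (2 * (Real.pi:ℝ) / n * j * k)) = ((zet n)^k)^j := by
      rw [show Complex.I * (2 * ((Real.pi:ℝ):ℂ) / n * j * k)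
          = ((k*j : ℕ):ℂ) * (2 * ((Real.pi:ℝ):ℂ) * Complex.I / n) by push_cast; field_simp]
      rw [Complex.exp_nat_mul, ← zet, pow_mul]
    have hzne : (zet n)^k ≠ 0 := by
      intro h
      have : ‖(zet n)^k‖ = 0 := by rw [h, norm_zero]
      rw [norm_pow, norm_zet n hn, one_pow] at this
      norm_num at this
    have hQ := Qne n hn k (β:ℂ) hβc
    rw [hexpid, show (((1 - 2*a*Real.cos (2 * Real.pi / n * k))^2 : ℝ) : ℂ)
      = (((1 - 2*a*Real.cos (2 * Real.pi / n * k) : ℝ)) : ℂ)^2 by push_cast; ring]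
    rw [cosid n hn k a β key hβ]
    field_simp
    ring
  rw [Finset.sum_congr rfl hterm, ← Finset.mul_sum, Ssum n hn j hj (β:ℂ) hβc]
  rw [← realside n j hn hj β hβ]
  have hnj : ((n-j:ℕ):ℝ) = (n:ℝ) - j := by rw [Nat.cast_sub hj.le]
  have hnjc : ((n-j:ℕ):ℂ) = (n:ℂ) - j := by
    have := hnj
    push_cast [Nat.cast_sub hj.le]
    ring
  rw [hnjc]
  push_cast [hnj]
  ring


/-- Closed form for `φ₂(θ)` (lag-`j` covariance of the circular CAR model of order 2,
up to the factor `σ²(2a²+1)`), with `θ = j/n` and `β = (1+√(1−4a²))/(2a)`. -/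
theorem car2_covariance_closed_form (n : ℕ) (hn : 1 ≤ n) (a : ℝ) (ha : 0 < a) (ha' : a < 1/2)
    (j : ℕ) (hj : j ≤ n) :
    let β : ℝ := (1 + Real.sqrt (1 - 4*a^2)) / (2*a)
    let θ : ℝ := (j : ℝ) / n
    (1 / (n : ℂ)) * ∑ k ∈ Finset.range n,
        Complex.exp (Complex.I * (2 * π / n * j * k))
          / (((1 - 2*a*Real.cos (2 * π / n * k))^2 : ℝ) : ℂ)
      = (((n : ℝ) * (((1/2) * Real.cosh (n * Real.log β / 2)
              + (1/n) * (Real.cosh (Real.log β) / Real.sinh (Real.log β))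
                  * Real.sinh (n * Real.log β / 2))
            / ((Real.tanh (Real.log β))^2 * (Real.sinh (n * Real.log β / 2))^2))
            * Real.cosh (n * Real.log β * (θ - 1/2))
          - (n : ℝ) * (1 / ((Real.tanh (Real.log β))^2 * Real.sinh (n * Real.log β / 2)))
            * (θ - 1/2) * Real.sinh (n * Real.log β * (θ - 1/2)) : ℝ) : ℂ) := by
  intro β θ
  have hs0 : 0 < 1 - 4*a^2 := by nlinarith
  have hs2 : Real.sqrt (1 - 4*a^2)^2 = 1 - 4*a^2 := Real.sq_sqrt (le_of_lt hs0)
  have hspos : 0 < Real.sqrt (1 - 4*a^2) := Real.sqrt_pos.2 hs0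
  have hβ : 1 < β := by
    show 1 < (1 + Real.sqrt (1 - 4*a^2)) / (2*a)
    rw [lt_div_iff₀ (by linarith)]
    nlinarith
  have key : a*(β^2+1) = β := by
    show a*(((1 + Real.sqrt (1 - 4*a^2)) / (2*a))^2+1) = (1 + Real.sqrt (1 - 4*a^2)) / (2*a)
    have ha0 : a ≠ 0 := ne_of_gt ha
    field_simp
    nlinarith [hs2, Real.sq_sqrt (show (0:ℝ) ≤ 1 - a^2*4 by nlinarith)]
  have hθ : θ = (j:ℝ)/n := rfl
  rcases lt_or_eq_of_le hj with hlt | heq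
  · rw [hθ]
    exact main_lt n hn a j hlt β hβ key
  · rw [hθ, heq]
    have hnC : (n:ℂ) ≠ 0 := Nat.cast_ne_zero.2 (by omega)
    have hn0 : (n:ℝ) ≠ 0 := Nat.cast_ne_zero.2 (by omega)
    have hterm : ∀ k ∈ Finset.range n,
        Complex.exp (Complex.I * (2 * ((Real.pi:ℝ):ℂ) / n * (n:ℕ) * k))
            / (((1 - 2*a*Real.cos (2 * Real.pi / n * k))^2 : ℝ) : ℂ)
        = Complex.exp (Complex.I * (2 * ((Real.pi:ℝ):ℂ) / n * ((0:ℕ):ℂ) * k))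
            / (((1 - 2*a*Real.cos (2 * Real.pi / n * k))^2 : ℝ) : ℂ) := by
      intro k hk
      congr 1
      rw [show Complex.I * (2 * ((Real.pi:ℝ):ℂ) / n * (n:ℕ) * k)
          = (k:ℕ) * (2 * ((Real.pi:ℝ):ℂ) * Complex.I) by push_cast; field_simp]
      rw [Complex.exp_nat_mul, Complex.exp_two_pi_mul_I, one_pow]
      rw [show Complex.I * (2 * ((Real.pi:ℝ):ℂ) / n * ((0:ℕ):ℂ) * k) = 0 by push_cast; ring]
      rw [Complex.exp_zero]
    rw [Finset.sum_congr rfl hterm]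
    rw [main_lt n hn a 0 (by omega) β hβ key]
    refine congrArg _ ?_
    have e0 : ((0:ℕ):ℝ)/(n:ℝ) - 1/2 = -(1/2) := by norm_num
    have e1 : (n:ℝ)/(n:ℝ) - 1/2 = 1/2 := by rw [div_self hn0]; norm_num
    rw [e0, e1, show (n:ℝ)*Real.log β*(-(1/2)) = -((n:ℝ)*Real.log β*(1/2)) by ring,
      Real.cosh_neg, Real.sinh_neg]
    ring
end
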